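/- arXiv:1905.05630 — 10 statements merged into one kernel-verified Lean document; each statement's English description precedes it below -/
import Mathlib

section
/- The map X ↦ ‖π(X*X)‖^{1/2} is a norm on the reduced crossed product 𝒞: it vanishes only at X = 0, is absolutely homogeneous, and satisfies the triangle inequality. -/
set_option synthInstance.maxHeartbeats 1000000
set_option maxHeartbeats 1000000

open scoped InnerProductSpace
open ContinuousLinearMap

noncomputable section

/-- `l2 G H` is the Hilbert space `ℓ²(G,H)` of square-summable `H`-valued functions on `G`. -/
abbrev l2 (G : Type) (H : Type) [NormedAddCommGroup H] : Type := lp (fun _ : G => H) 2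

theorem hadamard_stmt0
    {H : Type} [NormedAddCommGroup H] [InnerProductSpace ℂ H] [CompleteSpace H]
    {G : Type} [Group G] [DecidableEq G]
    (𝒜 : StarSubalgebra ℂ (H →L[ℂ] H))
    (h𝒜 : IsClosed (𝒜 : Set (H →L[ℂ] H)))
    (hnd : Dense (↑(Submodule.span ℂ {v : H | ∃ A ∈ 𝒜, ∃ w : H, v = A w}) : Set H))
    (α : G → (𝒜 ≃⋆ₐ[ℂ] 𝒜))
    (hα1 : ∀ A, α 1 A = A)
    (hαmul : ∀ g h A, α (g * h) A = α g (α h A))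
    (Ψ : 𝒜 → (l2 G H →L[ℂ] l2 G H))
    (hΨ : ∀ (A : 𝒜) (ξ : l2 G H) (g : G),
      (Ψ A ξ : ∀ _ : G, H) g = ((α g⁻¹ A : 𝒜) : H →L[ℂ] H) ((ξ : ∀ _ : G, H) g))
    (L : G → (l2 G H →L[ℂ] l2 G H))
    (hL : ∀ (g : G) (ξ : l2 G H) (h : G),
      (L g ξ : ∀ _ : G, H) h = (ξ : ∀ _ : G, H) (g⁻¹ * h))
    (𝒞 : Set (l2 G H →L[ℂ] l2 G H))
    (h𝒞 : 𝒞 = ((StarAlgebra.adjoin ℂ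
        (Set.range Ψ ∪ Set.range L)).topologicalClosure : Set _))
    (π : (l2 G H →L[ℂ] l2 G H) → (l2 G H →L[ℂ] l2 G H))
    (hπ : ∀ (X : l2 G H →L[ℂ] l2 G H) (ξ η : l2 G H), ⟪π X ξ, η⟫_ℂ =
      ∑' g : G, ⟪X (lp.single 2 g ((ξ : ∀ _ : G, H) g)),
        lp.single 2 g ((η : ∀ _ : G, H) g)⟫_ℂ)
    :
    (∀ X ∈ 𝒞, (Real.sqrt ‖π (star X * X)‖ = 0 ↔ X = 0)) ∧
    (∀ X ∈ 𝒞, ∀ c : ℂ, Real.sqrt ‖π (star (c • X) * (c • X))‖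
        = ‖c‖ * Real.sqrt ‖π (star X * X)‖) ∧
    (∀ X ∈ 𝒞, ∀ Y ∈ 𝒞, Real.sqrt ‖π (star (X + Y) * (X + Y))‖
        ≤ Real.sqrt ‖π (star X * X)‖ + Real.sqrt ‖π (star Y * Y)‖) := by
  classical
  -- membership of the "column" function in ℓ²
  have hmem : ∀ (X : l2 G H →L[ℂ] l2 G H) (ξ : l2 G H),
      Memℓp (fun g : G => X (lp.single 2 g ((ξ : ∀ _ : G, H) g))) 2 := by
    intro X ξ
    apply memℓp_gen
    have hξ : Summable (fun g : G => ‖(ξ : ∀ _ : G, H) g‖ ^ (2 : ENNReal).toReal) :=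
      (lp.memℓp ξ).summable (by norm_num)
    refine Summable.of_nonneg_of_le (fun g => ?_) (fun g => ?_)
      (hξ.mul_left (‖X‖ ^ (2 : ENNReal).toReal))
    · positivity
    · have h1 : ‖X (lp.single 2 g ((ξ : ∀ _ : G, H) g))‖ ≤
          ‖X‖ * ‖(ξ : ∀ _ : G, H) g‖ := by
        calc ‖X (lp.single 2 g ((ξ : ∀ _ : G, H) g))‖
            ≤ ‖X‖ * ‖(lp.single 2 g ((ξ : ∀ _ : G, H) g) : l2 G H)‖ := X.le_opNorm _
          _ = ‖X‖ * ‖(ξ : ∀ _ : G, H) g‖ := by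
              exact congrArg (‖X‖ * ·) (lp.norm_single (by norm_num) g _)
      have h2 : (0:ℝ) ≤ ‖X (lp.single 2 g ((ξ : ∀ _ : G, H) g))‖ := norm_nonneg _
      calc ‖X (lp.single 2 g ((ξ : ∀ _ : G, H) g))‖ ^ (2 : ENNReal).toReal
          ≤ (‖X‖ * ‖(ξ : ∀ _ : G, H) g‖) ^ (2 : ENNReal).toReal := by
            apply Real.rpow_le_rpow h2 h1 (by norm_num)
        _ = ‖X‖ ^ (2 : ENNReal).toReal * ‖(ξ : ∀ _ : G, H) g‖ ^ (2 : ENNReal).toReal :=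
            Real.mul_rpow (norm_nonneg _) (norm_nonneg _)
  -- the column operator
  set T : (l2 G H →L[ℂ] l2 G H) → l2 G H → lp (fun _ : G => l2 G H) 2 :=
    fun X ξ => ⟨fun g => X (lp.single 2 g ((ξ : ∀ _ : G, H) g)), hmem X ξ⟩ with hT
  have hTapp : ∀ X ξ (g : G),
      (T X ξ : ∀ _ : G, l2 G H) g = X (lp.single 2 g ((ξ : ∀ _ : G, H) g)) :=
    fun X ξ g => rfl
  -- key identity
  have key : ∀ (X : l2 G H →L[ℂ] l2 G H) (ξ η : l2 G H),
      ⟪π (star X * X) ξ, η⟫_ℂ = ⟪T X ξ, T X η⟫_ℂ := by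
    intro X ξ η
    rw [hπ, lp.inner_eq_tsum]
    congr 1
    funext g
    rw [hTapp, hTapp]
    rw [ContinuousLinearMap.mul_apply, ContinuousLinearMap.star_eq_adjoint,
      ContinuousLinearMap.adjoint_inner_left]
  -- inner self
  have keyself : ∀ (X : l2 G H →L[ℂ] l2 G H) (ξ : l2 G H),
      ⟪π (star X * X) ξ, ξ⟫_ℂ = ((‖T X ξ‖ : ℂ)) ^ 2 := by
    intro X ξ
    rw [key, inner_self_eq_norm_sq_to_K]
    norm_cast
  -- (a): pointwise bound on T by sqrt of the norm
  have hTle : ∀ (X : l2 G H →L[ℂ] l2 G H) (ξ : l2 G H),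
      ‖T X ξ‖ ≤ Real.sqrt ‖π (star X * X)‖ * ‖ξ‖ := by
    intro X ξ
    have h1 : ‖T X ξ‖ ^ 2 ≤ ‖π (star X * X)‖ * ‖ξ‖ ^ 2 := by
      have := keyself X ξ
      have h2 : ‖⟪π (star X * X) ξ, ξ⟫_ℂ‖ = ‖T X ξ‖ ^ 2 := by
        rw [this]
        simp [norm_pow, RCLike.norm_ofReal, abs_norm]
      calc ‖T X ξ‖ ^ 2 = ‖⟪π (star X * X) ξ, ξ⟫_ℂ‖ := h2.symm
        _ ≤ ‖π (star X * X) ξ‖ * ‖ξ‖ := norm_inner_le_norm _ _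
        _ ≤ ‖π (star X * X)‖ * ‖ξ‖ * ‖ξ‖ :=
            mul_le_mul_of_nonneg_right ((π (star X * X)).le_opNorm ξ) (norm_nonneg _)
        _ = ‖π (star X * X)‖ * ‖ξ‖ ^ 2 := by ring
    calc ‖T X ξ‖ = Real.sqrt (‖T X ξ‖ ^ 2) := (Real.sqrt_sq (norm_nonneg _)).symm
      _ ≤ Real.sqrt (‖π (star X * X)‖ * ‖ξ‖ ^ 2) := Real.sqrt_le_sqrt h1
      _ = Real.sqrt ‖π (star X * X)‖ * ‖ξ‖ := by
          rw [Real.sqrt_mul (norm_nonneg _), Real.sqrt_sq (norm_nonneg _)]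
  -- (b): converse bound on the operator norm
  have hople : ∀ (X : l2 G H →L[ℂ] l2 G H) (M : ℝ), 0 ≤ M →
      (∀ ξ : l2 G H, ‖T X ξ‖ ≤ M * ‖ξ‖) → ‖π (star X * X)‖ ≤ M ^ 2 := by
    intro X M hM hb
    refine ContinuousLinearMap.opNorm_le_bound _ (by positivity) (fun ξ => ?_)
    by_cases h0 : ‖π (star X * X) ξ‖ = 0
    · rw [h0]; positivity
    · have h1 : ‖π (star X * X) ξ‖ ^ 2 = ‖⟪π (star X * X) ξ, π (star X * X) ξ⟫_ℂ‖ := by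
        rw [inner_self_eq_norm_sq_to_K]
        simp [norm_pow, RCLike.norm_ofReal, abs_norm]
      have h2 : ‖π (star X * X) ξ‖ ^ 2 ≤ M ^ 2 * ‖ξ‖ * ‖π (star X * X) ξ‖ := by
        calc ‖π (star X * X) ξ‖ ^ 2
            = ‖⟪π (star X * X) ξ, π (star X * X) ξ⟫_ℂ‖ := h1
          _ = ‖⟪T X ξ, T X (π (star X * X) ξ)⟫_ℂ‖ := by rw [← key]
          _ ≤ ‖T X ξ‖ * ‖T X (π (star X * X) ξ)‖ := norm_inner_le_norm _ _
          _ ≤ (M * ‖ξ‖) * (M * ‖π (star X * X) ξ‖) :=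
              mul_le_mul (hb ξ) (hb _) (norm_nonneg _) (by positivity)
          _ = M ^ 2 * ‖ξ‖ * ‖π (star X * X) ξ‖ := by ring
      have hpos : 0 < ‖π (star X * X) ξ‖ := lt_of_le_of_ne (norm_nonneg _) (Ne.symm h0)
      nlinarith [hpos]
  refine ⟨?_, ?_, ?_⟩
  · -- definiteness
    intro X _
    constructor
    · intro h
      have hnorm : ‖π (star X * X)‖ = 0 := by
        have := (Real.sqrt_eq_zero (norm_nonneg _)).mp h
        exact this
      have hzero : π (star X * X) = 0 := norm_eq_zero.mp hnorm
      have hTzero : ∀ ξ : l2 G H, T X ξ = 0 := by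
        intro ξ
        have : ⟪T X ξ, T X ξ⟫_ℂ = 0 := by
          rw [← key, hzero]
          simp
        exact inner_self_eq_zero.mp this
      have hsingle : ∀ (g : G) (v : H), X (lp.single 2 g v) = 0 := by
        intro g v
        have h1 := congrArg (fun f : lp (fun _ : G => l2 G H) 2 =>
          (f : ∀ _ : G, l2 G H) g) (hTzero (lp.single 2 g v))
        simp only [hTapp] at h1
        rw [lp.single_apply_self] at h1
        simpa using h1
      refine ContinuousLinearMap.ext fun ξ => ?_
      have hs : HasSum (fun g : G => lp.single 2 g ((ξ : ∀ _ : G, H) g)) ξ :=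
        lp.hasSum_single (by norm_num) ξ
      have hs2 := hs.mapL X
      simp only [hsingle] at hs2
      simpa using hs2.unique hasSum_zero
    · rintro rfl
      have : π (star (0 : l2 G H →L[ℂ] l2 G H) * 0) = 0 := by
        refine ContinuousLinearMap.ext fun ξ => ext_inner_right ℂ (fun η => ?_)
        rw [hπ]
        simp
      rw [this]
      simp
  · -- homogeneity
    intro X _ c
    have hπsmul : ∀ (s : ℂ) (A : l2 G H →L[ℂ] l2 G H), π (s • A) = s • π A := by
      intro s A
      refine ContinuousLinearMap.ext fun ξ => ext_inner_right ℂ (fun η => ?_)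
      rw [hπ]
      simp only [ContinuousLinearMap.smul_apply, inner_smul_left]
      rw [tsum_mul_left, ← hπ]
    have hsc : star (c • X) * (c • X) = ((starRingEnd ℂ) c * c) • (star X * X) := by
      rw [star_smul, smul_mul_smul_comm]
      rfl
    rw [hsc, hπsmul,
      norm_smul ((starRingEnd ℂ) c * c) (π (star X * X))]
    have : ‖(starRingEnd ℂ) c * c‖ = ‖c‖ * ‖c‖ := by
      rw [norm_mul, RCLike.norm_conj]
    rw [this, Real.sqrt_mul (mul_self_nonneg ‖c‖),
      Real.sqrt_mul_self (norm_nonneg c)]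
  · -- triangle inequality
    intro X _ Y _
    have hTadd : ∀ ξ : l2 G H, T (X + Y) ξ = T X ξ + T Y ξ := by
      intro ξ
      apply lp.ext
      funext g
      rw [lp.coeFn_add]
      simp only [Pi.add_apply, hTapp, ContinuousLinearMap.add_apply]
    set MX := Real.sqrt ‖π (star X * X)‖ with hMX
    set MY := Real.sqrt ‖π (star Y * Y)‖ with hMY
    have hMXnn : 0 ≤ MX := Real.sqrt_nonneg _
    have hMYnn : 0 ≤ MY := Real.sqrt_nonneg _
    have hb : ∀ ξ : l2 G H, ‖T (X + Y) ξ‖ ≤ (MX + MY) * ‖ξ‖ := by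
      intro ξ
      rw [hTadd]
      calc ‖T X ξ + T Y ξ‖ ≤ ‖T X ξ‖ + ‖T Y ξ‖ := norm_add_le _ _
        _ ≤ MX * ‖ξ‖ + MY * ‖ξ‖ := add_le_add (hTle X ξ) (hTle Y ξ)
        _ = (MX + MY) * ‖ξ‖ := by ring
    have h1 : ‖π (star (X + Y) * (X + Y))‖ ≤ (MX + MY) ^ 2 :=
      hople (X + Y) (MX + MY) (by positivity) hb
    calc Real.sqrt ‖π (star (X + Y) * (X + Y))‖
        ≤ Real.sqrt ((MX + MY) ^ 2) := Real.sqrt_le_sqrt h1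
      _ = MX + MY := Real.sqrt_sq (by positivity)
end
end

section
/- For every X ∈ 𝒞, every finite subset K ⊆ G, and every family (Y_k)_{k∈K} of elements of Ψ(𝒜), one has π((X − Σ_{h∈K} L_h Y_h)*(X − Σ_{k∈K} L_k Y_k)) ≥ π((X − Σ_{h∈K} L_h X_h)*(X − Σ_{k∈K} L_k X_k)) ≥ 0 in the order on self-adjoint bounded operators, where X_g = π(L_g*X). -/
set_option synthInstance.maxHeartbeats 1000000
set_option maxHeartbeats 1000000

open scoped InnerProductSpace
open ContinuousLinearMap

noncomputable section

section Aux

variable {H : Type} [NormedAddCommGroup H] [InnerProductSpace ℂ H] [CompleteSpace H]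
  {G : Type} [Group G] [DecidableEq G]

theorem hadamard_single_zero (g : G) : lp.single 2 g (0 : H) = (0 : l2 G H) := by
  apply lp.ext; funext j
  by_cases hj : j = g
  · subst hj; simp [lp.single_apply_self, lp.coeFn_zero]
  · simp [lp.single_apply_ne _ _ _ hj, lp.coeFn_zero]

theorem hadamard_single_sub (g : G) (v w : H) :
    lp.single 2 g v - lp.single 2 g w = (lp.single 2 g (v - w) : l2 G H) := by
  apply lp.ext; funext j
  by_cases hj : j = g
  · subst hj; simp [lp.single_apply_self, lp.coeFn_sub]
  · simp [lp.single_apply_ne _ _ _ hj, lp.coeFn_sub]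

theorem hadamard_starL (L : G → (l2 G H →L[ℂ] l2 G H))
    (hL : ∀ (g : G) (ξ : l2 G H) (h : G),
      (L g ξ : ∀ _ : G, H) h = (ξ : ∀ _ : G, H) (g⁻¹ * h)) (g : G) :
    star (L g) = L g⁻¹ := by
  rw [star_eq_adjoint]
  symm
  rw [eq_adjoint_iff]
  intro x y
  rw [lp.inner_eq_tsum, lp.inner_eq_tsum]
  have key := (Equiv.mulLeft g).tsum_eq
    (f := fun h => ⟪(x : ∀ _ : G, H) h, (y : ∀ _ : G, H) (g⁻¹ * h)⟫_ℂ)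
  simp only [Equiv.coe_mulLeft] at key
  have h1 : ∀ i, ⟪((L g⁻¹) x : ∀ _ : G, H) i, (y : ∀ _ : G, H) i⟫_ℂ
      = ⟪(x : ∀ _ : G, H) (g * i), (y : ∀ _ : G, H) (g⁻¹ * (g * i))⟫_ℂ := by
    intro i; rw [hL]; simp [inv_mul_cancel_left]
  have h2 : ∀ i, ⟪(x : ∀ _ : G, H) i, ((L g) y : ∀ _ : G, H) i⟫_ℂ
      = ⟪(x : ∀ _ : G, H) i, (y : ∀ _ : G, H) (g⁻¹ * i)⟫_ℂ := fun i => by rw [hL]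
  simp only [h1, h2]
  exact key

theorem hadamard_L_single (L : G → (l2 G H →L[ℂ] l2 G H))
    (hL : ∀ (g : G) (ξ : l2 G H) (h : G),
      (L g ξ : ∀ _ : G, H) h = (ξ : ∀ _ : G, H) (g⁻¹ * h))
    (h g : G) (v : H) : L h (lp.single 2 g v) = lp.single 2 (h * g) v := by
  apply lp.ext; funext j
  rw [hL]
  by_cases hj : j = h * g
  · subst hj; rw [lp.single_apply_self]
    rw [show h⁻¹ * (h * g) = g by group, lp.single_apply_self]
  · rw [lp.single_apply_ne _ _ _ hj, lp.single_apply_ne]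
    intro hc; exact hj (by rw [← hc]; group)

theorem hadamard_pi_single
    (π : (l2 G H →L[ℂ] l2 G H) → (l2 G H →L[ℂ] l2 G H))
    (hπ : ∀ (X : l2 G H →L[ℂ] l2 G H) (ξ η : l2 G H), ⟪π X ξ, η⟫_ℂ =
      ∑' g : G, ⟪X (lp.single 2 g ((ξ : ∀ _ : G, H) g)),
        lp.single 2 g ((η : ∀ _ : G, H) g)⟫_ℂ)
    (W : l2 G H →L[ℂ] l2 G H) (g : G) (v : H) :
    π W (lp.single 2 g v) = lp.single 2 g ((W (lp.single 2 g v) : ∀ _ : G, H) g) := by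
  apply ext_inner_right ℂ
  intro η
  rw [hπ]
  rw [tsum_eq_single g]
  · rw [lp.single_apply_self, lp.inner_single_left, lp.inner_single_right]
  · intro g' hg'
    rw [lp.single_apply_ne _ _ _ hg', hadamard_single_zero, map_zero]
    simp

theorem hadamard_quad
    (π : (l2 G H →L[ℂ] l2 G H) → (l2 G H →L[ℂ] l2 G H))
    (hπ : ∀ (X : l2 G H →L[ℂ] l2 G H) (ξ η : l2 G H), ⟪π X ξ, η⟫_ℂ =
      ∑' g : G, ⟪X (lp.single 2 g ((ξ : ∀ _ : G, H) g)),
        lp.single 2 g ((η : ∀ _ : G, H) g)⟫_ℂ)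
    (Z : l2 G H →L[ℂ] l2 G H) (ξ : l2 G H) :
    ⟪π (star Z * Z) ξ, ξ⟫_ℂ
      = ((∑' g : G, ‖Z (lp.single 2 g ((ξ : ∀ _ : G, H) g))‖ ^ 2 : ℝ) : ℂ) := by
  rw [hπ, Complex.ofReal_tsum]
  congr 1; funext g
  rw [mul_apply_eq_comp, star_eq_adjoint, adjoint_inner_left, inner_self_eq_norm_sq_to_K]
  norm_cast

theorem hadamard_summ (Z : l2 G H →L[ℂ] l2 G H) (ξ : l2 G H) :
    Summable (fun g : G => ‖Z (lp.single 2 g ((ξ : ∀ _ : G, H) g))‖ ^ 2) := by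
  have h0 : Summable (fun g : G => ‖(ξ : ∀ _ : G, H) g‖ ^ 2) := by
    have h2 := (lp.memℓp ξ).summable (p := 2) (by norm_num)
    simpa [ENNReal.toReal_ofNat, Real.rpow_two] using h2
  refine Summable.of_nonneg_of_le (fun g => sq_nonneg _) (fun g => ?_) (h0.mul_left (‖Z‖ ^ 2))
  have hb : ‖Z (lp.single 2 g ((ξ : ∀ _ : G, H) g))‖ ≤ ‖Z‖ * ‖(ξ : ∀ _ : G, H) g‖ := by
    calc ‖Z (lp.single 2 g ((ξ : ∀ _ : G, H) g))‖
        ≤ ‖Z‖ * ‖(lp.single 2 g ((ξ : ∀ _ : G, H) g) : l2 G H)‖ := Z.le_opNorm _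
      _ = ‖Z‖ * ‖(ξ : ∀ _ : G, H) g‖ := by
          rw [lp.norm_single (p := 2) (E := fun _ : G => H) (by norm_num) g ((ξ : ∀ _ : G, H) g)]
  calc ‖Z (lp.single 2 g ((ξ : ∀ _ : G, H) g))‖ ^ 2
      ≤ (‖Z‖ * ‖(ξ : ∀ _ : G, H) g‖) ^ 2 := pow_le_pow_left₀ (norm_nonneg _) hb 2
    _ = ‖Z‖ ^ 2 * ‖(ξ : ∀ _ : G, H) g‖ ^ 2 := by ring

theorem hadamard_pos_of_quad (T : l2 G H →L[ℂ] l2 G H)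
    (h : ∀ ξ : l2 G H, ∃ r : ℝ, 0 ≤ r ∧ ⟪T ξ, ξ⟫_ℂ = (r : ℂ)) :
    (0 : l2 G H →L[ℂ] l2 G H) ≤ T := by
  rw [nonneg_iff_isPositive, isPositive_iff_complex]
  intro ξ
  obtain ⟨r, hr0, hr⟩ := h ξ
  rw [hr]
  simp [hr0]

end Aux

theorem hadamard_stmt1
    {H : Type} [NormedAddCommGroup H] [InnerProductSpace ℂ H] [CompleteSpace H]
    {G : Type} [Group G] [DecidableEq G]
    (𝒜 : StarSubalgebra ℂ (H →L[ℂ] H))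
    (h𝒜 : IsClosed (𝒜 : Set (H →L[ℂ] H)))
    (hnd : Dense (↑(Submodule.span ℂ {v : H | ∃ A ∈ 𝒜, ∃ w : H, v = A w}) : Set H))
    (α : G → (𝒜 ≃⋆ₐ[ℂ] 𝒜))
    (hα1 : ∀ A, α 1 A = A)
    (hαmul : ∀ g h A, α (g * h) A = α g (α h A))
    (Ψ : 𝒜 → (l2 G H →L[ℂ] l2 G H))
    (hΨ : ∀ (A : 𝒜) (ξ : l2 G H) (g : G),
      (Ψ A ξ : ∀ _ : G, H) g = ((α g⁻¹ A : 𝒜) : H →L[ℂ] H) ((ξ : ∀ _ : G, H) g))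
    (L : G → (l2 G H →L[ℂ] l2 G H))
    (hL : ∀ (g : G) (ξ : l2 G H) (h : G),
      (L g ξ : ∀ _ : G, H) h = (ξ : ∀ _ : G, H) (g⁻¹ * h))
    (𝒞 : Set (l2 G H →L[ℂ] l2 G H))
    (h𝒞 : 𝒞 = ((StarAlgebra.adjoin ℂ
        (Set.range Ψ ∪ Set.range L)).topologicalClosure : Set _))
    (π : (l2 G H →L[ℂ] l2 G H) → (l2 G H →L[ℂ] l2 G H))
    (hπ : ∀ (X : l2 G H →L[ℂ] l2 G H) (ξ η : l2 G H), ⟪π X ξ, η⟫_ℂ =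
      ∑' g : G, ⟪X (lp.single 2 g ((ξ : ∀ _ : G, H) g)),
        lp.single 2 g ((η : ∀ _ : G, H) g)⟫_ℂ)
    :
    ∀ X ∈ 𝒞, ∀ (K : Finset G) (Y : G → (l2 G H →L[ℂ] l2 G H)),
      (∀ k ∈ K, Y k ∈ Set.range Ψ) →
      (0 : l2 G H →L[ℂ] l2 G H)
          ≤ π (star (X - ∑ h ∈ K, L h * π (star (L h) * X))
              * (X - ∑ k ∈ K, L k * π (star (L k) * X))) ∧
      π (star (X - ∑ h ∈ K, L h * π (star (L h) * X))
          * (X - ∑ k ∈ K, L k * π (star (L k) * X)))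
        ≤ π (star (X - ∑ h ∈ K, L h * Y h) * (X - ∑ k ∈ K, L k * Y k)) := by
  intro X _hX K Y hY
  set E : l2 G H →L[ℂ] l2 G H := X - ∑ h ∈ K, L h * π (star (L h) * X) with hEdef
  set F : l2 G H →L[ℂ] l2 G H := X - ∑ k ∈ K, L k * Y k with hFdef
  set D : l2 G H →L[ℂ] l2 G H := ∑ h ∈ K, L h * (π (star (L h) * X) - Y h) with hDdef
  have hFD : F = E + D := by
    rw [hEdef, hFdef, hDdef]
    simp only [mul_sub, Finset.sum_sub_distrib]
    abel
  -- The h*g coordinate of E applied to a single at g vanishes, for h ∈ K.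
  have hE0 : ∀ (g : G) (v : H), ∀ h ∈ K, (E (lp.single 2 g v) : ∀ _ : G, H) (h * g) = 0 := by
    intro g v h hh
    have hterm : ∀ k ∈ K, (L k * π (star (L k) * X)) (lp.single 2 g v)
        = lp.single 2 (k * g) ((X (lp.single 2 g v) : ∀ _ : G, H) (k * g)) := by
      intro k _
      rw [mul_apply_eq_comp, hadamard_pi_single π hπ, hadamard_L_single L hL]
      congr 1
      rw [mul_apply_eq_comp, hadamard_starL L hL, hL]
      congr 1
      group
    have hEapp : (E (lp.single 2 g v) : ∀ _ : G, H) (h * g)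
        = (X (lp.single 2 g v) : ∀ _ : G, H) (h * g)
          - ∑ k ∈ K, ((L k * π (star (L k) * X)) (lp.single 2 g v) : ∀ _ : G, H) (h * g) := by
      rw [hEdef, sub_apply, lp.coeFn_sub, Pi.sub_apply, sum_apply, lp.coeFn_sum, Finset.sum_apply]
    rw [hEapp]
    have hsum : ∑ k ∈ K, ((L k * π (star (L k) * X)) (lp.single 2 g v) : ∀ _ : G, H) (h * g)
        = (X (lp.single 2 g v) : ∀ _ : G, H) (h * g) := by
      rw [Finset.sum_congr rfl (fun k hk => by rw [hterm k hk])]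
      rw [Finset.sum_eq_single_of_mem h hh]
      · rw [lp.single_apply_self]
      · intro k _hk hkh
        refine lp.single_apply_ne _ _ _ (fun hc => hkh ?_)
        exact (mul_right_cancel hc).symm
    rw [hsum, sub_self]
  -- D maps a single at g into the span of singles at h*g, h ∈ K, and is orthogonal to E's image.
  have horth : ∀ (g : G) (v : H), ⟪E (lp.single 2 g v), D (lp.single 2 g v)⟫_ℂ = 0 := by
    intro g v
    have hDapp : D (lp.single 2 g v) = ∑ h ∈ K,
        lp.single 2 (h * g)
          (((π (star (L h) * X) - Y h) (lp.single 2 g v) : ∀ _ : G, H) g) := by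
      rw [hDdef, sum_apply]
      refine Finset.sum_congr rfl (fun h hh => ?_)
      obtain ⟨A, hA⟩ := hY h hh
      have hY1 : Y h (lp.single 2 g v) = lp.single 2 g ((Y h (lp.single 2 g v) : ∀ _ : G, H) g) := by
        rw [← hA]
        apply lp.ext; funext j
        by_cases hj : j = g
        · subst hj; rw [lp.single_apply_self]
        · rw [lp.single_apply_ne _ _ _ hj, hΨ, lp.single_apply_ne _ _ _ hj, map_zero]
      have hπ1 : π (star (L h) * X) (lp.single 2 g v)
          = lp.single 2 g ((π (star (L h) * X) (lp.single 2 g v) : ∀ _ : G, H) g) := by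
        rw [hadamard_pi_single π hπ, lp.single_apply_self]
      have hdiff : (π (star (L h) * X) - Y h) (lp.single 2 g v)
          = lp.single 2 g (((π (star (L h) * X) - Y h) (lp.single 2 g v) : ∀ _ : G, H) g) := by
        rw [sub_apply]
        conv_lhs => rw [hπ1, hY1]
        rw [hadamard_single_sub]
        congr 1
      rw [mul_apply_eq_comp]
      conv_lhs => rw [hdiff]
      rw [hadamard_L_single L hL]
    rw [hDapp, inner_sum]
    refine Finset.sum_eq_zero (fun h hh => ?_)
    rw [lp.inner_single_right, hE0 g v h hh, inner_zero_left]
  -- pointwise Pythagoras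
  have hpyth : ∀ (g : G) (v : H),
      ‖F (lp.single 2 g v)‖ ^ 2 = ‖E (lp.single 2 g v)‖ ^ 2 + ‖D (lp.single 2 g v)‖ ^ 2 := by
    intro g v
    have := norm_add_sq_eq_norm_sq_add_norm_sq_of_inner_eq_zero
      (E (lp.single 2 g v)) (D (lp.single 2 g v)) (horth g v)
    have happ : F (lp.single 2 g v) = E (lp.single 2 g v) + D (lp.single 2 g v) := by
      rw [hFD, add_apply]
    rw [happ]
    simpa [pow_two] using this
  constructor
  · refine hadamard_pos_of_quad _ (fun ξ => ?_)
    exact ⟨∑' g : G, ‖E (lp.single 2 g ((ξ : ∀ _ : G, H) g))‖ ^ 2,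
      tsum_nonneg (fun g => sq_nonneg _), hadamard_quad π hπ E ξ⟩
  · rw [le_def, ← nonneg_iff_isPositive] at *
    refine hadamard_pos_of_quad _ (fun ξ => ?_)
    refine ⟨∑' g : G, ‖D (lp.single 2 g ((ξ : ∀ _ : G, H) g))‖ ^ 2,
      tsum_nonneg (fun g => sq_nonneg _), ?_⟩
    have hsE := hadamard_summ E ξ
    have hsD := hadamard_summ D ξ
    have htsum : (∑' g : G, ‖F (lp.single 2 g ((ξ : ∀ _ : G, H) g))‖ ^ 2)
        = (∑' g : G, ‖E (lp.single 2 g ((ξ : ∀ _ : G, H) g))‖ ^ 2)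
          + ∑' g : G, ‖D (lp.single 2 g ((ξ : ∀ _ : G, H) g))‖ ^ 2 := by
      rw [tsum_congr (fun g => hpyth g ((ξ : ∀ _ : G, H) g))]
      exact Summable.tsum_add hsE hsD
    rw [sub_apply, inner_sub_left, hadamard_quad π hπ F ξ, hadamard_quad π hπ E ξ, htsum]
    push_cast
    ring
end
end

section
/- For every X ∈ 𝒞, the net of finite partial sums Σ_{g∈K} L_g X_g (indexed by the finite subsets K of G directed by inclusion) converges to X in the π-norm; that is, for every ε > 0 there is a finite set L ⊆ G such that for every finite K ⊇ L, ‖π((X − Σ_{g∈K} L_g X_g)*(X − Σ_{g∈K} L_g X_g))‖^{1/2} ≤ ε. -/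
set_option synthInstance.maxHeartbeats 1000000
set_option maxHeartbeats 1000000
set_option linter.unusedSectionVars false

open scoped InnerProductSpace
open ContinuousLinearMap

noncomputable section

section helpers
variable {H : Type} [NormedAddCommGroup H] [InnerProductSpace ℂ H] [CompleteSpace H]
variable {G : Type} [Group G] [DecidableEq G]

lemma single_zero (g : G) : (lp.single 2 g (0 : H) : l2 G H) = 0 := by
  apply lp.ext
  funext j
  by_cases h : j = g
  · subst h; simp [lp.single_apply_self]
  · simp [lp.single_apply_ne _ _ _ h]

variable (π : (l2 G H →L[ℂ] l2 G H) → (l2 G H →L[ℂ] l2 G H))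
variable (hπ : ∀ (X : l2 G H →L[ℂ] l2 G H) (ξ η : l2 G H), ⟪π X ξ, η⟫_ℂ =
      ∑' g : G, ⟪X (lp.single 2 g ((ξ : ∀ _ : G, H) g)),
        lp.single 2 g ((η : ∀ _ : G, H) g)⟫_ℂ)

include hπ

lemma pi_coord (W : l2 G H →L[ℂ] l2 G H) (ξ : l2 G H) (h : G) :
    (π W ξ : ∀ _ : G, H) h = (W (lp.single 2 h ((ξ : ∀ _ : G, H) h)) : ∀ _ : G, H) h := by
  apply ext_inner_right ℂ
  intro w
  have h1 : ⟪(π W ξ : ∀ _ : G, H) h, w⟫_ℂ = ⟪π W ξ, lp.single 2 h w⟫_ℂ :=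
    (lp.inner_single_right _ _ _).symm
  rw [h1, hπ]
  rw [tsum_eq_single h]
  · rw [lp.single_apply_self, lp.inner_single_right]
  · intro g hg
    rw [lp.single_apply_ne _ _ _ hg, single_zero, inner_zero_right]

lemma pi_single (W : l2 G H →L[ℂ] l2 G H) (g : G) (v : H) :
    π W (lp.single 2 g v) = lp.single 2 g ((W (lp.single 2 g v) : ∀ _ : G, H) g) := by
  apply lp.ext
  funext k
  rw [pi_coord π hπ]
  by_cases h : k = g
  · subst h
    rw [lp.single_apply_self, lp.single_apply_self]
  · rw [lp.single_apply_ne _ _ _ h, lp.single_apply_ne _ _ _ h, single_zero, map_zero]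
    simp

lemma pi_qf (W : l2 G H →L[ℂ] l2 G H) (h : G) (v : H) :
    ⟪π W (lp.single 2 h v), (lp.single 2 h v : l2 G H)⟫_ℂ
      = ⟪W (lp.single 2 h v), (lp.single 2 h v : l2 G H)⟫_ℂ := by
  rw [hπ]
  rw [tsum_eq_single h]
  · rw [lp.single_apply_self]
  · intro g hg
    rw [lp.single_apply_ne _ _ _ hg, single_zero, inner_zero_right]

lemma pi_add (A B' : l2 G H →L[ℂ] l2 G H) : π (A + B') = π A + π B' := by
  ext ξ h
  have : ((π A + π B') ξ : ∀ _ : G, H) h = (π A ξ : ∀ _ : G, H) h + (π B' ξ : ∀ _ : G, H) h := by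
    simp [lp.coeFn_add]
  rw [this, pi_coord π hπ, pi_coord π hπ, pi_coord π hπ]
  simp [lp.coeFn_add]

lemma pi_zero : π 0 = 0 := by
  ext ξ h
  rw [pi_coord π hπ]
  simp

lemma pi_sub (A B' : l2 G H →L[ℂ] l2 G H) : π (A - B') = π A - π B' := by
  ext ξ h
  have : ((π A - π B') ξ : ∀ _ : G, H) h = (π A ξ : ∀ _ : G, H) h - (π B' ξ : ∀ _ : G, H) h := by
    simp [lp.coeFn_sub]
  rw [this, pi_coord π hπ, pi_coord π hπ, pi_coord π hπ]
  simp [lp.coeFn_sub]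

lemma pi_smul (c : ℂ) (A : l2 G H →L[ℂ] l2 G H) : π (c • A) = c • π A := by
  ext ξ h
  have : ((c • π A) ξ : ∀ _ : G, H) h = c • (π A ξ : ∀ _ : G, H) h := by
    simp [lp.coeFn_smul]
  rw [this, pi_coord π hπ, pi_coord π hπ]
  simp [lp.coeFn_smul]

lemma pi_sum {ι : Type} (s : Finset ι) (f : ι → (l2 G H →L[ℂ] l2 G H)) :
    π (∑ i ∈ s, f i) = ∑ i ∈ s, π (f i) := by
  classical
  induction s using Finset.induction_on with
  | empty => simpa using pi_zero π hπ
  | insert _ _ hx ih =>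
      rw [Finset.sum_insert hx, Finset.sum_insert hx, pi_add π hπ, ih]

lemma pi_star (W : l2 G H →L[ℂ] l2 G H) : π (star W) = star (π W) := by
  rw [star_eq_adjoint, star_eq_adjoint]
  rw [ContinuousLinearMap.eq_adjoint_iff]
  intro ξ η
  rw [hπ, ← inner_conj_symm ξ ((π W) η), hπ, RCLike.conj_tsum]
  apply tsum_congr
  intro g
  rw [ContinuousLinearMap.adjoint_inner_left, ← inner_conj_symm]


omit hπ

variable (L : G → (l2 G H →L[ℂ] l2 G H))
variable (hL : ∀ (g : G) (ξ : l2 G H) (h : G),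
      (L g ξ : ∀ _ : G, H) h = (ξ : ∀ _ : G, H) (g⁻¹ * h))

include hL

lemma Lsingle (g k : G) (v : H) :
    L g (lp.single 2 k v) = lp.single 2 (g * k) v := by
  apply lp.ext
  funext m
  rw [hL]
  by_cases h : m = g * k
  · subst h
    have : g⁻¹ * (g * k) = k := by group
    rw [this, lp.single_apply_self, lp.single_apply_self]
  · have h2 : g⁻¹ * m ≠ k := by
      intro hc
      apply h
      rw [← hc]; group
    rw [lp.single_apply_ne _ _ _ h2, lp.single_apply_ne _ _ _ h]

lemma Lmul (g h : G) : L g * L h = L (g * h) := by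
  ext ξ k
  show (L g (L h ξ) : ∀ _ : G, H) k = _
  rw [hL, hL, hL]
  congr 1
  group

lemma Lone : L 1 = 1 := by
  ext ξ k
  show (L 1 ξ : ∀ _ : G, H) k = (ξ : ∀ _ : G, H) k
  rw [hL]
  congr 1
  group

lemma Lstar (g : G) : star (L g) = L g⁻¹ := by
  rw [star_eq_adjoint]
  symm
  rw [ContinuousLinearMap.eq_adjoint_iff]
  intro ξ η
  rw [lp.inner_eq_tsum, lp.inner_eq_tsum]
  have := (Equiv.mulLeft g).tsum_eq
    (fun h => ⟪(ξ : ∀ _ : G, H) h, (L g η : ∀ _ : G, H) h⟫_ℂ)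
  rw [← this]
  apply tsum_congr
  intro h
  rw [hL, hL]
  have h1 : (Equiv.mulLeft g) h = g * h := rfl
  rw [h1]
  have h2 : g⁻¹ * (g * h) = h := by group
  have h3 : (g⁻¹)⁻¹ * h = g * h := by group
  rw [h2, h3]


omit hL

variable (𝒜 : StarSubalgebra ℂ (H →L[ℂ] H))
variable (α : G → (𝒜 ≃⋆ₐ[ℂ] 𝒜))
variable (hα1 : ∀ A, α 1 A = A)
variable (hαmul : ∀ g h A, α (g * h) A = α g (α h A))
variable (Ψ : 𝒜 → (l2 G H →L[ℂ] l2 G H))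
variable (hΨ : ∀ (A : 𝒜) (ξ : l2 G H) (g : G),
      (Ψ A ξ : ∀ _ : G, H) g = ((α g⁻¹ A : 𝒜) : H →L[ℂ] H) ((ξ : ∀ _ : G, H) g))

include hΨ

lemma Psi_one : Ψ 1 = 1 := by
  ext ξ k
  rw [hΨ]
  simp

lemma Psi_mul (A B : 𝒜) : Ψ A * Ψ B = Ψ (A * B) := by
  ext ξ k
  show (Ψ A (Ψ B ξ) : ∀ _ : G, H) k = _
  rw [hΨ, hΨ, hΨ]
  simp

lemma Psi_star (A : 𝒜) : star (Ψ A) = Ψ (star A) := by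
  rw [star_eq_adjoint]
  symm
  rw [ContinuousLinearMap.eq_adjoint_iff]
  intro ξ η
  rw [lp.inner_eq_tsum, lp.inner_eq_tsum]
  apply tsum_congr
  intro k
  rw [hΨ, hΨ]
  rw [map_star]
  have : ((star (α k⁻¹ A) : 𝒜) : H →L[ℂ] H) = star ((α k⁻¹ A : 𝒜) : H →L[ℂ] H) := rfl
  rw [this, star_eq_adjoint, ContinuousLinearMap.adjoint_inner_left]

include hαmul hL

lemma Psi_comm (A : 𝒜) (h : G) : Ψ A * L h = L h * Ψ (α h⁻¹ A) := by
  ext ξ k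
  show (Ψ A (L h ξ) : ∀ _ : G, H) k = (L h (Ψ (α h⁻¹ A) ξ) : ∀ _ : G, H) k
  rw [hΨ, hL, hL, hΨ]
  rw [← hαmul]
  congr 2
  group



omit hΨ hαmul hL

lemma single_coord (g : G) (v : H) (j : G) :
    ((lp.single 2 g v : l2 G H) : ∀ _ : G, H) j = if j = g then v else 0 := by
  by_cases h : j = g
  · subst h; simp [lp.single_apply_self]
  · simp [lp.single_apply_ne _ _ _ h, h]

include hπ hΨ in
lemma pi_Psi (A : 𝒜) : π (Ψ A) = Ψ A := by
  ext ξ h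
  rw [pi_coord π hπ, hΨ, hΨ, lp.single_apply_self]

include hπ in
lemma pi_pi (V : l2 G H →L[ℂ] l2 G H) : π (π V) = π V := by
  ext ξ h
  rw [pi_coord π hπ, pi_coord π hπ, pi_coord π hπ, lp.single_apply_self]

include hπ hL in
lemma pi_L_pi (V : l2 G H →L[ℂ] l2 G H) (k : G) :
    π (L k * π V) = if k = 1 then π V else 0 := by
  by_cases hk : k = 1
  · subst hk
    rw [if_pos rfl]
    ext ξ h
    rw [pi_coord π hπ]
    simp only [ContinuousLinearMap.mul_apply]
    rw [hL, pi_single π hπ]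
    simp only [inv_one, one_mul, lp.single_apply_self]
    rw [pi_coord π hπ]
  · rw [if_neg hk]
    ext ξ h
    rw [pi_coord π hπ]
    simp only [ContinuousLinearMap.mul_apply]
    rw [hL, pi_single π hπ]
    have hne : k⁻¹ * h ≠ h := by
      intro hc
      apply hk
      have hc' : k⁻¹ * h = 1 * h := by simpa using hc
      have : k⁻¹ = 1 := mul_right_cancel hc'
      exact inv_eq_one.mp this
    rw [lp.single_apply_ne _ _ _ hne]
    simp

include hπ hL in
lemma key_lemma (X V : l2 G H →L[ℂ] l2 G H) (k : G) :
    π (star X * (L k * π V)) = star (π (L k⁻¹ * X)) * π V := by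
  refine ContinuousLinearMap.ext fun ξ => ?_
  apply ext_inner_right ℂ
  intro η
  rw [hπ]
  have hR : (⟪(star (π (L k⁻¹ * X)) * π V) ξ, η⟫_ℂ)
      = ∑' h : G, ⟪(V (lp.single 2 h ((ξ : ∀ _ : G, H) h)) : ∀ _ : G, H) h,
          (X (lp.single 2 h ((η : ∀ _ : G, H) h)) : ∀ _ : G, H) (k * h)⟫_ℂ := by
    rw [ContinuousLinearMap.mul_apply, star_eq_adjoint, ContinuousLinearMap.adjoint_inner_left,
      ← inner_conj_symm ((π V) ξ) ((π (L k⁻¹ * X)) η), hπ, RCLike.conj_tsum]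
    apply tsum_congr
    intro h
    rw [inner_conj_symm, lp.inner_single_left, pi_coord π hπ V ξ h]
    congr 1
    simp only [ContinuousLinearMap.mul_apply]
    rw [hL]
    congr 1
    group
  rw [hR]
  apply tsum_congr
  intro h
  simp only [ContinuousLinearMap.mul_apply]
  rw [pi_single π hπ, Lsingle L hL, star_eq_adjoint, ContinuousLinearMap.adjoint_inner_left,
    lp.inner_single_left]



include hαmul hΨ hL in
lemma gen_mul (g h : G) (A A' : 𝒜) :
    (L g * Ψ A) * (L h * Ψ A') = L (g * h) * Ψ (α h⁻¹ A * A') := by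
  have h1 : (L g * Ψ A) * (L h * Ψ A') = L g * (Ψ A * L h) * Ψ A' := by
    simp only [mul_assoc]
  rw [h1, Psi_comm L hL 𝒜 α hαmul Ψ hΨ]
  have h2 : L g * (L h * Ψ ((α h⁻¹) A)) * Ψ A' = (L g * L h) * (Ψ ((α h⁻¹) A) * Ψ A') := by
    simp only [mul_assoc]
  rw [h2, Lmul L hL, Psi_mul 𝒜 α Ψ hΨ]

include hαmul hΨ hL in
lemma gen_star (g : G) (A : 𝒜) :
    star (L g * Ψ A) = L g⁻¹ * Ψ (α g (star A)) := by
  rw [star_mul, Psi_star 𝒜 α Ψ hΨ, Lstar L hL, Psi_comm L hL 𝒜 α hαmul Ψ hΨ, inv_inv]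

include hαmul hΨ hL in
lemma span_mul_mem {x y : l2 G H →L[ℂ] l2 G H}
    (hx : x ∈ Submodule.span ℂ {W : l2 G H →L[ℂ] l2 G H | ∃ g A, W = L g * Ψ A})
    (hy : y ∈ Submodule.span ℂ {W : l2 G H →L[ℂ] l2 G H | ∃ g A, W = L g * Ψ A}) :
    x * y ∈ Submodule.span ℂ {W : l2 G H →L[ℂ] l2 G H | ∃ g A, W = L g * Ψ A} := by
  induction hx using Submodule.span_induction with
  | mem z hz =>
      induction hy using Submodule.span_induction with
      | mem w hw =>
          obtain ⟨g, A, rfl⟩ := hz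
          obtain ⟨g', A', rfl⟩ := hw
          exact Submodule.subset_span ⟨g * g', _, gen_mul L hL 𝒜 α hαmul Ψ hΨ g g' A A'⟩
      | zero => rw [mul_zero]; exact Submodule.zero_mem _
      | add a b ha hb iha ihb => rw [mul_add]; exact Submodule.add_mem _ iha ihb
      | smul c a ha iha => rw [mul_smul_comm]; exact Submodule.smul_mem _ _ iha
  | zero => rw [zero_mul]; exact Submodule.zero_mem _
  | add a b ha hb iha ihb => rw [add_mul]; exact Submodule.add_mem _ iha ihb
  | smul c a ha iha => rw [smul_mul_assoc]; exact Submodule.smul_mem _ _ iha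

include hαmul hΨ hL in
lemma span_star_mem {x : l2 G H →L[ℂ] l2 G H}
    (hx : x ∈ Submodule.span ℂ {W : l2 G H →L[ℂ] l2 G H | ∃ g A, W = L g * Ψ A}) :
    star x ∈ Submodule.span ℂ {W : l2 G H →L[ℂ] l2 G H | ∃ g A, W = L g * Ψ A} := by
  induction hx using Submodule.span_induction with
  | mem z hz =>
      obtain ⟨g, A, rfl⟩ := hz
      exact Submodule.subset_span ⟨g⁻¹, _, gen_star L hL 𝒜 α hαmul Ψ hΨ g A⟩
  | zero => rw [star_zero]; exact Submodule.zero_mem _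
  | add a b ha hb iha ihb => rw [star_add]; exact Submodule.add_mem _ iha ihb
  | smul c a ha iha =>
      rw [star_smul]
      exact Submodule.smul_mem _ _ iha

include hαmul hΨ hL in
lemma one_mem_gen : (1 : l2 G H →L[ℂ] l2 G H) ∈
    {W : l2 G H →L[ℂ] l2 G H | ∃ g A, W = L g * Ψ A} :=
  ⟨1, 1, by rw [Lone L hL, Psi_one 𝒜 α Ψ hΨ, one_mul]⟩

include hαmul hΨ hL in
lemma adjoin_le_span {x : l2 G H →L[ℂ] l2 G H}
    (hx : x ∈ StarAlgebra.adjoin ℂ (Set.range Ψ ∪ Set.range L)) :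
    x ∈ Submodule.span ℂ {W : l2 G H →L[ℂ] l2 G H | ∃ g A, W = L g * Ψ A} := by
  induction hx using StarAlgebra.adjoin_induction with
  | mem z hz =>
      rcases hz with hz | hz
      · obtain ⟨A, rfl⟩ := hz
        exact Submodule.subset_span ⟨1, A, by rw [Lone L hL, one_mul]⟩
      · obtain ⟨g, rfl⟩ := hz
        exact Submodule.subset_span ⟨g, 1, by rw [Psi_one 𝒜 α Ψ hΨ, mul_one]⟩
  | algebraMap r =>
      rw [Algebra.algebraMap_eq_smul_one]
      exact Submodule.smul_mem _ _ (Submodule.subset_span (one_mem_gen L hL 𝒜 α hαmul Ψ hΨ))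
  | add a b ha hb iha ihb => exact Submodule.add_mem _ iha ihb
  | mul a b ha hb iha ihb => exact span_mul_mem L hL 𝒜 α hαmul Ψ hΨ iha ihb
  | star a ha iha => exact span_star_mem L hL 𝒜 α hαmul Ψ hΨ iha


include hπ hL hΨ in
lemma pi_L_Psi (A : 𝒜) (k : G) : π (L k * Ψ A) = if k = 1 then Ψ A else 0 := by
  conv_lhs => rw [← pi_Psi π hπ 𝒜 α Ψ hΨ A]
  rw [pi_L_pi π hπ L hL, pi_Psi π hπ 𝒜 α Ψ hΨ]

lemma l2_norm_sq (f : l2 G H) : ‖f‖ ^ 2 = ∑' h : G, ‖(f : ∀ _ : G, H) h‖ ^ 2 := by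
  have hs : Summable fun h : G => ⟪(f : ∀ _ : G, H) h, (f : ∀ _ : G, H) h⟫_ℂ :=
    lp.summable_inner f f
  have h1 : RCLike.re (K := ℂ) ⟪f, f⟫_ℂ = ‖f‖ ^ 2 := inner_self_eq_norm_sq f
  rw [← h1, lp.inner_eq_tsum, RCLike.re_tsum _ hs]
  exact tsum_congr fun h => inner_self_eq_norm_sq _

lemma l2_summable_sq (f : l2 G H) : Summable fun h : G => ‖(f : ∀ _ : G, H) h‖ ^ 2 := by
  have hp : 0 < (2 : ENNReal).toReal := by norm_num
  have h0 := (lp.memℓp f).summable hp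
  have h2 : (2 : ENNReal).toReal = (2 : ℝ) := by norm_num
  rw [h2] at h0
  exact h0.congr fun h => by rw [show (2:ℝ) = ((2:ℕ):ℝ) by norm_num, Real.rpow_natCast]

end helpers

theorem hadamard_stmt2
    {H : Type} [NormedAddCommGroup H] [InnerProductSpace ℂ H] [CompleteSpace H]
    {G : Type} [Group G] [DecidableEq G]
    (𝒜 : StarSubalgebra ℂ (H →L[ℂ] H))
    (h𝒜 : IsClosed (𝒜 : Set (H →L[ℂ] H)))
    (hnd : Dense (↑(Submodule.span ℂ {v : H | ∃ A ∈ 𝒜, ∃ w : H, v = A w}) : Set H))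
    (α : G → (𝒜 ≃⋆ₐ[ℂ] 𝒜))
    (hα1 : ∀ A, α 1 A = A)
    (hαmul : ∀ g h A, α (g * h) A = α g (α h A))
    (Ψ : 𝒜 → (l2 G H →L[ℂ] l2 G H))
    (hΨ : ∀ (A : 𝒜) (ξ : l2 G H) (g : G),
      (Ψ A ξ : ∀ _ : G, H) g = ((α g⁻¹ A : 𝒜) : H →L[ℂ] H) ((ξ : ∀ _ : G, H) g))
    (L : G → (l2 G H →L[ℂ] l2 G H))
    (hL : ∀ (g : G) (ξ : l2 G H) (h : G),
      (L g ξ : ∀ _ : G, H) h = (ξ : ∀ _ : G, H) (g⁻¹ * h))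
    (𝒞 : Set (l2 G H →L[ℂ] l2 G H))
    (h𝒞 : 𝒞 = ((StarAlgebra.adjoin ℂ
        (Set.range Ψ ∪ Set.range L)).topologicalClosure : Set _))
    (π : (l2 G H →L[ℂ] l2 G H) → (l2 G H →L[ℂ] l2 G H))
    (hπ : ∀ (X : l2 G H →L[ℂ] l2 G H) (ξ η : l2 G H), ⟪π X ξ, η⟫_ℂ =
      ∑' g : G, ⟪X (lp.single 2 g ((ξ : ∀ _ : G, H) g)),
        lp.single 2 g ((η : ∀ _ : G, H) g)⟫_ℂ)
    :
    ∀ X ∈ 𝒞, ∀ ε : ℝ, 0 < ε → ∃ s : Finset G, ∀ t : Finset G, s ⊆ t →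
      Real.sqrt ‖π (star (X - ∑ g ∈ t, L g * π (star (L g) * X))
          * (X - ∑ g ∈ t, L g * π (star (L g) * X)))‖ ≤ ε := by
  intro X hX ε hε
  rw [h𝒞, StarSubalgebra.topologicalClosure_coe] at hX
  obtain ⟨Y, hY, hXY⟩ := Metric.mem_closure_iff.mp hX ε hε
  rw [dist_eq_norm] at hXY
  have hYspan := adjoin_le_span L hL 𝒜 α hαmul Ψ hΨ hY
  obtain ⟨n, c, w, hsum⟩ := Submodule.mem_span_set'.mp hYspan
  choose γ A hw using fun i => (w i).2
  refine ⟨Finset.image γ Finset.univ, fun t ht => ?_⟩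
  set E : l2 G H →L[ℂ] l2 G H := X - Y with hE
  set S : l2 G H →L[ℂ] l2 G H := ∑ g ∈ t, L g * π (star (L g) * E) with hS
  set D : l2 G H →L[ℂ] l2 G H :=
    ∑ g ∈ t, star (π (star (L g) * E)) * π (star (L g) * E) with hD
  -- Step A : partial sums recover Y
  have hYsum : Y = ∑ i : Fin n, c i • (L (γ i) * Ψ (A i)) := by
    rw [← hsum]
    exact Finset.sum_congr rfl fun i _ => by rw [hw i]
  have hYg : ∀ g : G, π (star (L g) * Y)
      = ∑ i : Fin n, c i • (if g = γ i then Ψ (A i) else 0) := by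
    intro g
    rw [hYsum, Finset.mul_sum]
    have h1 : ∀ i ∈ (Finset.univ : Finset (Fin n)),
        star (L g) * (c i • (L (γ i) * Ψ (A i))) = c i • (L (g⁻¹ * γ i) * Ψ (A i)) := by
      intro i _
      rw [mul_smul_comm, Lstar L hL, ← mul_assoc, Lmul L hL]
    rw [Finset.sum_congr rfl h1, pi_sum π hπ]
    refine Finset.sum_congr rfl fun i _ => ?_
    rw [pi_smul π hπ, pi_L_Psi π hπ L hL 𝒜 α Ψ hΨ]
    congr 2
    · simp [inv_mul_eq_one, eq_comm]
  have hSY : ∑ g ∈ t, L g * π (star (L g) * Y) = Y := by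
    have h1 : ∀ g ∈ t, L g * π (star (L g) * Y)
        = ∑ i : Fin n, (if g = γ i then c i • (L g * Ψ (A i)) else 0) := by
      intro g _
      rw [hYg g, Finset.mul_sum]
      refine Finset.sum_congr rfl fun i _ => ?_
      rw [mul_smul_comm]
      by_cases hgi : g = γ i
      · simp [hgi]
      · simp [hgi]
    rw [Finset.sum_congr rfl h1, Finset.sum_comm]
    have h2 : ∀ i ∈ (Finset.univ : Finset (Fin n)),
        (∑ g ∈ t, if g = γ i then c i • (L g * Ψ (A i)) else 0)
          = c i • (L (γ i) * Ψ (A i)) := by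
      intro i _
      rw [Finset.sum_ite_eq' t (γ i) (fun g => c i • (L g * Ψ (A i)))]
      rw [if_pos (ht (Finset.mem_image.mpr ⟨i, Finset.mem_univ i, rfl⟩))]
    rw [Finset.sum_congr rfl h2, ← hYsum]
  -- Step B : rewrite the remainder
  have hRE : X - ∑ g ∈ t, L g * π (star (L g) * X) = E - S := by
    have h1 : ∀ g ∈ t, L g * π (star (L g) * X)
        = L g * π (star (L g) * Y) + L g * π (star (L g) * E) := by
      intro g _
      have h2 : star (L g) * X = star (L g) * Y + star (L g) * E := by
        rw [← mul_add]
        congr 1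
        rw [hE]
        abel
      rw [h2, pi_add π hπ, mul_add]
    rw [Finset.sum_congr rfl h1, Finset.sum_add_distrib, hSY, ← hS, hE]
    abel
  -- Step C : Pythagoras
  have hC1 : ∀ h' ∈ t, π (L h'⁻¹ * S) = π (star (L h') * E) := by
    intro h' hh'
    rw [hS, Finset.mul_sum]
    have h1 : ∀ g ∈ t, L h'⁻¹ * (L g * π (star (L g) * E))
        = L (h'⁻¹ * g) * π (star (L g) * E) := by
      intro g _
      rw [← mul_assoc, Lmul L hL]
    rw [Finset.sum_congr rfl h1, pi_sum π hπ]
    have h2 : ∀ g ∈ t, π (L (h'⁻¹ * g) * π (star (L g) * E))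
        = if g = h' then π (star (L g) * E) else 0 := by
      intro g _
      rw [pi_L_pi π hπ L hL]
      congr 1
      simp [inv_mul_eq_one, eq_comm]
    rw [Finset.sum_congr rfl h2, Finset.sum_ite_eq' t h' (fun g => π (star (L g) * E)),
      if_pos hh']
  have hC2 : π (star E * S) = D := by
    rw [hS, Finset.mul_sum, pi_sum π hπ, hD]
    refine Finset.sum_congr rfl fun g _ => ?_
    rw [key_lemma π hπ L hL E (star (L g) * E) g, ← Lstar L hL]
  have hC3 : π (star S * S) = D := by
    have h1 : star S * S = ∑ h' ∈ t, star S * (L h' * π (star (L h') * E)) := by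
      nth_rewrite 2 [hS]
      rw [Finset.mul_sum]
    rw [h1, pi_sum π hπ, hD]
    refine Finset.sum_congr rfl fun h' hh' => ?_
    rw [key_lemma π hπ L hL S (star (L h') * E) h', hC1 h' hh']
  have hC4 : π (star S * E) = D := by
    have h1 : star S * E = star (star E * S) := by rw [star_mul, star_star]
    rw [h1, pi_star π hπ, hC2, hD, star_sum]
    refine Finset.sum_congr rfl fun g _ => ?_
    rw [star_mul, star_star]
  have hPY : π (star (E - S) * (E - S)) = π (star E * E) - D := by
    have hexp : star (E - S) * (E - S)
        = (star E * E - star E * S) - (star S * E - star S * S) := by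
      rw [star_sub]
      noncomm_ring
    rw [hexp, pi_sub π hπ, pi_sub π hπ, pi_sub π hπ, hC2, hC4, hC3]
    abel
  -- Step D : positivity of D and the single-vector bound
  have hDpos : ∀ ζ : l2 G H, 0 ≤ RCLike.re (K := ℂ) ⟪D ζ, ζ⟫_ℂ := by
    intro ζ
    rw [hD, ContinuousLinearMap.sum_apply, sum_inner, map_sum]
    refine Finset.sum_nonneg fun g _ => ?_
    rw [ContinuousLinearMap.mul_apply, star_eq_adjoint,
      ContinuousLinearMap.adjoint_inner_left]
    exact inner_self_nonneg
  have hsingle : ∀ (h' : G) (v : H), ‖(E - S) (lp.single 2 h' v)‖ ≤ ‖E‖ * ‖v‖ := by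
    intro h' v
    have e1 : RCLike.re (K := ℂ)
        ⟪π (star (E - S) * (E - S)) (lp.single 2 h' v), (lp.single 2 h' v : l2 G H)⟫_ℂ
        = ‖(E - S) (lp.single 2 h' v)‖ ^ 2 := by
      rw [pi_qf π hπ, ContinuousLinearMap.mul_apply, star_eq_adjoint,
        ContinuousLinearMap.adjoint_inner_left, inner_self_eq_norm_sq]
    have e2 : RCLike.re (K := ℂ)
        ⟪π (star E * E) (lp.single 2 h' v), (lp.single 2 h' v : l2 G H)⟫_ℂ
        = ‖E (lp.single 2 h' v)‖ ^ 2 := by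
      rw [pi_qf π hπ, ContinuousLinearMap.mul_apply, star_eq_adjoint,
        ContinuousLinearMap.adjoint_inner_left, inner_self_eq_norm_sq]
    rw [hPY] at e1
    rw [ContinuousLinearMap.sub_apply, inner_sub_left, map_sub] at e1
    have e3 : ‖(E - S) (lp.single 2 h' v)‖ ^ 2 ≤ ‖E (lp.single 2 h' v)‖ ^ 2 := by
      rw [← e1, ← e2]
      have := hDpos (lp.single 2 h' v)
      linarith
    have e4 : ‖E (lp.single 2 h' v)‖ ≤ ‖E‖ * ‖v‖ := by
      have e5 : ‖(lp.single 2 h' v : l2 G H)‖ = ‖v‖ := by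
        have hp : 0 < (2 : ENNReal).toReal := by norm_num
        exact lp.norm_single (E := fun _ : G => H) (p := 2) (by norm_num) h' v
      calc ‖E (lp.single 2 h' v)‖ ≤ ‖E‖ * ‖(lp.single 2 h' v : l2 G H)‖ :=
            E.le_opNorm _
        _ = ‖E‖ * ‖v‖ := by rw [e5]
    nlinarith [norm_nonneg ((E - S) (lp.single 2 h' v)), norm_nonneg (E (lp.single 2 h' v)),
      norm_nonneg E, norm_nonneg v]
  -- Step E/F : operator norm bound for the compressed operator
  have hopbound : ‖π (star (E - S) * (E - S))‖ ≤ ‖E‖ ^ 2 := by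
    refine ContinuousLinearMap.opNorm_le_bound _ (by positivity) fun ξ => ?_
    have hcoordb : ∀ h' : G,
        ‖(π (star (E - S) * (E - S)) ξ : ∀ _ : G, H) h'‖
          ≤ ‖E‖ ^ 2 * ‖(ξ : ∀ _ : G, H) h'‖ := by
      intro h'
      rw [pi_coord π hπ]
      set u := ((star (E - S) * (E - S)) (lp.single 2 h' ((ξ : ∀ _ : G, H) h'))
          : ∀ _ : G, H) h' with hu
      have e1 : ‖u‖ ^ 2 = RCLike.re (K := ℂ) ⟪u, u⟫_ℂ := (inner_self_eq_norm_sq u).symm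
      have e2 : ⟪u, u⟫_ℂ = ⟪(E - S) (lp.single 2 h' ((ξ : ∀ _ : G, H) h')),
          (E - S) (lp.single 2 h' u)⟫_ℂ := by
        have e3 : ⟪u, u⟫_ℂ
            = ⟪((star (E - S) * (E - S)) (lp.single 2 h' ((ξ : ∀ _ : G, H) h')) : l2 G H),
                (lp.single 2 h' u : l2 G H)⟫_ℂ := by
          rw [lp.inner_single_right, hu]
        rw [e3, ContinuousLinearMap.mul_apply, star_eq_adjoint,
          ContinuousLinearMap.adjoint_inner_left]
      have e4 : ‖u‖ ^ 2 ≤ (‖E‖ * ‖(ξ : ∀ _ : G, H) h'‖) * (‖E‖ * ‖u‖) := by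
        rw [e1, e2]
        calc RCLike.re (K := ℂ) ⟪(E - S) (lp.single 2 h' ((ξ : ∀ _ : G, H) h')),
              (E - S) (lp.single 2 h' u)⟫_ℂ
            ≤ ‖(⟪(E - S) (lp.single 2 h' ((ξ : ∀ _ : G, H) h')),
              (E - S) (lp.single 2 h' u)⟫_ℂ : ℂ)‖ := RCLike.re_le_norm _
          _ ≤ ‖(E - S) (lp.single 2 h' ((ξ : ∀ _ : G, H) h'))‖
              * ‖(E - S) (lp.single 2 h' u)‖ := norm_inner_le_norm _ _
          _ ≤ (‖E‖ * ‖(ξ : ∀ _ : G, H) h'‖) * (‖E‖ * ‖u‖) := by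
              refine mul_le_mul (hsingle _ _) (hsingle _ _) (norm_nonneg _) ?_
              positivity
      by_cases hu0 : ‖u‖ = 0
      · rw [hu0]; positivity
      · have hu0' : 0 < ‖u‖ := lt_of_le_of_ne (norm_nonneg u) (Ne.symm hu0)
        have e5 : ‖u‖ * ‖u‖ ≤ (‖E‖ ^ 2 * ‖(ξ : ∀ _ : G, H) h'‖) * ‖u‖ := by nlinarith
        exact le_of_mul_le_mul_right e5 hu0'
    have h1 : ‖π (star (E - S) * (E - S)) ξ‖ ^ 2 ≤ (‖E‖ ^ 2) ^ 2 * ‖ξ‖ ^ 2 := by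
      rw [l2_norm_sq]
      have h2 : (‖E‖ ^ 2) ^ 2 * ‖ξ‖ ^ 2
          = ∑' h' : G, (‖E‖ ^ 2) ^ 2 * ‖(ξ : ∀ _ : G, H) h'‖ ^ 2 := by
        rw [tsum_mul_left, ← l2_norm_sq]
      rw [h2]
      refine Summable.tsum_le_tsum (fun h' => ?_) (l2_summable_sq _) ((l2_summable_sq ξ).mul_left _)
      calc ‖(π (star (E - S) * (E - S)) ξ : ∀ _ : G, H) h'‖ ^ 2
          ≤ (‖E‖ ^ 2 * ‖(ξ : ∀ _ : G, H) h'‖) ^ 2 := by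
            have := hcoordb h'
            have h3 : (0:ℝ) ≤ ‖(π (star (E - S) * (E - S)) ξ : ∀ _ : G, H) h'‖ :=
              norm_nonneg _
            nlinarith
        _ = (‖E‖ ^ 2) ^ 2 * ‖(ξ : ∀ _ : G, H) h'‖ ^ 2 := by ring
    nlinarith [norm_nonneg (π (star (E - S) * (E - S)) ξ), norm_nonneg ξ, norm_nonneg E,
      mul_nonneg (sq_nonneg ‖E‖) (norm_nonneg ξ)]
  -- conclusion
  rw [hRE]
  calc Real.sqrt ‖π (star (E - S) * (E - S))‖
      ≤ Real.sqrt (‖E‖ ^ 2) := Real.sqrt_le_sqrt hopbound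
    _ = ‖E‖ := Real.sqrt_sq (norm_nonneg E)
    _ ≤ ε := le_of_lt hXY
end
end

section
/- For all s, t ∈ G and all A, B ∈ 𝒜, the Hadamard product of the generators satisfies (L_s Ψ(A)) ⋆ (L_t Ψ(B)) = δ(s,t) · L_s Ψ(AB), where δ(s,t) = 1 if s = t and 0 otherwise. -/
set_option synthInstance.maxHeartbeats 1000000
set_option maxHeartbeats 1000000

open scoped InnerProductSpace
open ContinuousLinearMap

noncomputable section

/-- The Hadamard product `X ⋆ Y := V* ∘ ρ(X) ∘ F ∘ ρ(Y) ∘ V`. -/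
def hadamard {H : Type} [NormedAddCommGroup H] [InnerProductSpace ℂ H] [CompleteSpace H]
    {G : Type}
    (ρ : (l2 G H →L[ℂ] l2 G H) → (l2 G (l2 G H) →L[ℂ] l2 G (l2 G H)))
    (V : l2 G H →L[ℂ] l2 G (l2 G H))
    (F : l2 G (l2 G H) →L[ℂ] l2 G (l2 G H))
    (X Y : l2 G H →L[ℂ] l2 G H) : l2 G H →L[ℂ] l2 G H :=
  adjoint V ∘L (ρ X ∘L (F ∘L (ρ Y ∘L V)))

theorem hadamard_stmt6
    {H : Type} [NormedAddCommGroup H] [InnerProductSpace ℂ H] [CompleteSpace H]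
    {G : Type} [Group G] [DecidableEq G]
    (𝒜 : StarSubalgebra ℂ (H →L[ℂ] H))
    (h𝒜 : IsClosed (𝒜 : Set (H →L[ℂ] H)))
    (hnd : Dense (↑(Submodule.span ℂ {v : H | ∃ A ∈ 𝒜, ∃ w : H, v = A w}) : Set H))
    (α : G → (𝒜 ≃⋆ₐ[ℂ] 𝒜))
    (hα1 : ∀ A, α 1 A = A)
    (hαmul : ∀ g h A, α (g * h) A = α g (α h A))
    (Ψ : 𝒜 → (l2 G H →L[ℂ] l2 G H))
    (hΨ : ∀ (A : 𝒜) (ξ : l2 G H) (g : G),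
      (Ψ A ξ : ∀ _ : G, H) g = ((α g⁻¹ A : 𝒜) : H →L[ℂ] H) ((ξ : ∀ _ : G, H) g))
    (L : G → (l2 G H →L[ℂ] l2 G H))
    (hL : ∀ (g : G) (ξ : l2 G H) (h : G),
      (L g ξ : ∀ _ : G, H) h = (ξ : ∀ _ : G, H) (g⁻¹ * h))
    (𝒞 : Set (l2 G H →L[ℂ] l2 G H))
    (h𝒞 : 𝒞 = ((StarAlgebra.adjoin ℂ
        (Set.range Ψ ∪ Set.range L)).topologicalClosure : Set _))
    (ρ : (l2 G H →L[ℂ] l2 G H) → (l2 G (l2 G H) →L[ℂ] l2 G (l2 G H)))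
    (hρ : ∀ (X : l2 G H →L[ℂ] l2 G H) (Ξ : l2 G (l2 G H)) (g : G),
      (ρ X Ξ : ∀ _ : G, l2 G H) g = X ((Ξ : ∀ _ : G, l2 G H) g))
    (V : l2 G H →L[ℂ] l2 G (l2 G H))
    (hV : ∀ (ξ : l2 G H) (g : G),
      (V ξ : ∀ _ : G, l2 G H) g = lp.single 2 g ((ξ : ∀ _ : G, H) g))
    (F : l2 G (l2 G H) →L[ℂ] l2 G (l2 G H))
    (hF : ∀ (Ξ : l2 G (l2 G H)) (g h : G),
      ((F Ξ : ∀ _ : G, l2 G H) g : ∀ _ : G, H) h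
        = ((Ξ : ∀ _ : G, l2 G H) h : ∀ _ : G, H) g)
    :
    ∀ (s t : G) (A B : 𝒜),
      hadamard ρ V F (L s * Ψ A) (L t * Ψ B)
        = if s = t then L s * Ψ (A * B) else 0 := by
  have hadj : ∀ (Ξ : l2 G (l2 G H)) (ζ : l2 G H),
      (∀ g : G, ((Ξ : ∀ _ : G, l2 G H) g : ∀ _ : G, H) g = (ζ : ∀ _ : G, H) g) →
      adjoint V Ξ = ζ := by
    intro Ξ ζ hζ
    apply ext_inner_right ℂ
    intro η
    rw [ContinuousLinearMap.adjoint_inner_left]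
    rw [lp.inner_eq_tsum, lp.inner_eq_tsum]
    congr 1
    funext g
    rw [hV, lp.inner_single_right, hζ]
  intro s t A B
  refine ContinuousLinearMap.ext fun ξ => ?_
  show adjoint V (ρ (L s * Ψ A) (F (ρ (L t * Ψ B) (V ξ)))) = _
  apply hadj
  intro g
  by_cases hst : s = t
  · subst hst
    rw [hρ, ContinuousLinearMap.mul_apply, hL, hΨ, hF, hρ, hV, ContinuousLinearMap.mul_apply, hL, hΨ, lp.single_apply_self,
        if_pos rfl, ContinuousLinearMap.mul_apply, hL, hΨ, map_mul]
    simp [ContinuousLinearMap.mul_apply]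
  · have hne : t⁻¹ * g ≠ s⁻¹ * g := fun h => hst (inv_injective (mul_right_cancel h)).symm
    rw [hρ, ContinuousLinearMap.mul_apply, hL, hΨ, hF, hρ, hV, ContinuousLinearMap.mul_apply, hL, hΨ, lp.single_apply_ne _ _ _ hne,
        if_neg hst]
    simp
end
end

section
/- For all X, Y ∈ 𝒞 and all A ∈ 𝒜, the Hadamard product is a Ψ(𝒜)-bimodule map in the following sense: (X ⋆ Y)·Ψ(A) = X ⋆ (Y·Ψ(A)) and Ψ(A)·(X ⋆ Y) = (Ψ(A)·X) ⋆ Y. -/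
set_option synthInstance.maxHeartbeats 1000000
set_option maxHeartbeats 1000000

open scoped InnerProductSpace
open ContinuousLinearMap

noncomputable section

/-!
`Ψ(A)` is a diagonal operator: it acts on the `g`-th coordinate by the single operator
`α_{g⁻¹}(A)`. Diagonal operators `D` intertwine the diagonal embedding `V` with the
ampliation `ρ`, i.e. `V D = ρ(D) V` and `D V* = V* ρ(D)`; since `ρ` is multiplicative,
both bimodule identities follow by moving `D` through the product `V* ρ(X) F ρ(Y) V`.
-/

namespace Hadamard

variable {G H : Type} [NormedAddCommGroup H] [InnerProductSpace ℂ H]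

def IsDiagonal (D : l2 G H →L[ℂ] l2 G H) (d : G → H →L[ℂ] H) : Prop :=
  ∀ (ξ : l2 G H) (g : G), (D ξ : ∀ _ : G, H) g = d g ((ξ : ∀ _ : G, H) g)

def IsAmpliation (ρ : (l2 G H →L[ℂ] l2 G H) → (l2 G (l2 G H) →L[ℂ] l2 G (l2 G H))) :
    Prop :=
  ∀ (X : l2 G H →L[ℂ] l2 G H) (Ξ : l2 G (l2 G H)) (g : G),
    (ρ X Ξ : ∀ _ : G, l2 G H) g = X ((Ξ : ∀ _ : G, l2 G H) g)

def IsDiagonalEmbedding [DecidableEq G] (V : l2 G H →L[ℂ] l2 G (l2 G H)) : Prop :=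
  ∀ (ξ : l2 G H) (g : G), (V ξ : ∀ _ : G, l2 G H) g = lp.single 2 g ((ξ : ∀ _ : G, H) g)

variable {ρ : (l2 G H →L[ℂ] l2 G H) → (l2 G (l2 G H) →L[ℂ] l2 G (l2 G H))}
  {V : l2 G H →L[ℂ] l2 G (l2 G H)} {D : l2 G H →L[ℂ] l2 G H} {d : G → H →L[ℂ] H}

theorem IsAmpliation.map_mul (hρ : IsAmpliation ρ) (X Y : l2 G H →L[ℂ] l2 G H) :
    ρ (X * Y) = ρ X ∘L ρ Y := by
  ext Ξ : 1
  refine lp.ext (funext fun g => ?_)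
  rw [comp_apply, hρ, hρ, hρ, mul_apply_eq_comp]

variable [DecidableEq G]

theorem IsDiagonal.apply_single (hD : IsDiagonal D d) (g : G) (v : H) :
    D (lp.single 2 g v) = lp.single 2 g (d g v) := by
  refine lp.ext (funext fun h => ?_)
  rw [hD]
  obtain rfl | hne := eq_or_ne h g
  · rw [lp.single_apply_self, lp.single_apply_self]
  · rw [lp.single_apply_ne _ _ _ hne, lp.single_apply_ne _ _ _ hne, map_zero]

theorem IsDiagonalEmbedding.apply_single (hV : IsDiagonalEmbedding V) (g : G) (v : H) :
    V (lp.single 2 g v) = lp.single 2 g (lp.single 2 g v) := by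
  refine lp.ext (funext fun h => ?_)
  rw [hV]
  obtain rfl | hne := eq_or_ne h g
  · rw [lp.single_apply_self, lp.single_apply_self]
  · rw [lp.single_apply_ne _ _ _ hne, lp.single_apply_ne _ _ _ hne, lp.single_zero]

theorem IsDiagonal.diagonalEmbedding_comp (hD : IsDiagonal D d) (hρ : IsAmpliation ρ)
    (hV : IsDiagonalEmbedding V) : V ∘L D = ρ D ∘L V := by
  ext ξ : 1
  refine lp.ext (funext fun g => ?_)
  rw [comp_apply, comp_apply, hV, hρ, hV, hD.apply_single, hD]

variable [CompleteSpace H]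

theorem IsDiagonalEmbedding.adjoint_apply (hV : IsDiagonalEmbedding V) (Ξ : l2 G (l2 G H))
    (g : G) : (adjoint V Ξ : ∀ _ : G, H) g = ((Ξ : ∀ _ : G, l2 G H) g : ∀ _ : G, H) g := by
  refine ext_inner_left ℂ fun v => ?_
  rw [← lp.inner_single_left g v (adjoint V Ξ), adjoint_inner_right, hV.apply_single,
    lp.inner_single_left, lp.inner_single_left]

theorem IsDiagonal.comp_adjoint_diagonalEmbedding (hD : IsDiagonal D d) (hρ : IsAmpliation ρ)
    (hV : IsDiagonalEmbedding V) : D ∘L adjoint V = adjoint V ∘L ρ D := by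
  ext Ξ : 1
  refine lp.ext (funext fun g => ?_)
  rw [comp_apply, comp_apply, hD, hV.adjoint_apply, hV.adjoint_apply, hρ, hD]

theorem IsDiagonal.hadamard_mul (hD : IsDiagonal D d) (hρ : IsAmpliation ρ)
    (hV : IsDiagonalEmbedding V) (F : l2 G (l2 G H) →L[ℂ] l2 G (l2 G H))
    (X Y : l2 G H →L[ℂ] l2 G H) : hadamard ρ V F X Y * D = hadamard ρ V F X (Y * D) := by
  rw [hadamard, hadamard, hρ.map_mul, mul_def]
  simp only [comp_assoc, hD.diagonalEmbedding_comp hρ hV]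

theorem IsDiagonal.mul_hadamard (hD : IsDiagonal D d) (hρ : IsAmpliation ρ)
    (hV : IsDiagonalEmbedding V) (F : l2 G (l2 G H) →L[ℂ] l2 G (l2 G H))
    (X Y : l2 G H →L[ℂ] l2 G H) : D * hadamard ρ V F X Y = hadamard ρ V F (D * X) Y := by
  rw [hadamard, hadamard, hρ.map_mul, mul_def]
  simp only [← comp_assoc, hD.comp_adjoint_diagonalEmbedding hρ hV]

end Hadamard

open Hadamard in
theorem hadamard_stmt8_general
    {H : Type} [NormedAddCommGroup H] [InnerProductSpace ℂ H] [CompleteSpace H]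
    {G : Type} [Group G] [DecidableEq G]
    (𝒜 : StarSubalgebra ℂ (H →L[ℂ] H))
    (α : G → (𝒜 ≃⋆ₐ[ℂ] 𝒜))
    (Ψ : 𝒜 → (l2 G H →L[ℂ] l2 G H))
    (hΨ : ∀ (A : 𝒜) (ξ : l2 G H) (g : G),
      (Ψ A ξ : ∀ _ : G, H) g = ((α g⁻¹ A : 𝒜) : H →L[ℂ] H) ((ξ : ∀ _ : G, H) g))
    (L : G → (l2 G H →L[ℂ] l2 G H))
    (𝒞 : Set (l2 G H →L[ℂ] l2 G H))
    (ρ : (l2 G H →L[ℂ] l2 G H) → (l2 G (l2 G H) →L[ℂ] l2 G (l2 G H)))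
    (hρ : ∀ (X : l2 G H →L[ℂ] l2 G H) (Ξ : l2 G (l2 G H)) (g : G),
      (ρ X Ξ : ∀ _ : G, l2 G H) g = X ((Ξ : ∀ _ : G, l2 G H) g))
    (V : l2 G H →L[ℂ] l2 G (l2 G H))
    (hV : ∀ (ξ : l2 G H) (g : G),
      (V ξ : ∀ _ : G, l2 G H) g = lp.single 2 g ((ξ : ∀ _ : G, H) g))
    (F : l2 G (l2 G H) →L[ℂ] l2 G (l2 G H))
    :
    ∀ X ∈ 𝒞, ∀ Y ∈ 𝒞, ∀ A : 𝒜,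
      hadamard ρ V F X Y * Ψ A = hadamard ρ V F X (Y * Ψ A) ∧
      Ψ A * hadamard ρ V F X Y = hadamard ρ V F (Ψ A * X) Y := by
  intro X _ Y _ A
  have hΨA : IsDiagonal (Ψ A) fun g => ((α g⁻¹ A : 𝒜) : H →L[ℂ] H) := hΨ A
  exact ⟨hΨA.hadamard_mul hρ hV F X Y, hΨA.mul_hadamard hρ hV F X Y⟩

theorem hadamard_stmt8
    {H : Type} [NormedAddCommGroup H] [InnerProductSpace ℂ H] [CompleteSpace H]
    {G : Type} [Group G] [DecidableEq G]
    (𝒜 : StarSubalgebra ℂ (H →L[ℂ] H))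
    (h𝒜 : IsClosed (𝒜 : Set (H →L[ℂ] H)))
    (hnd : Dense (↑(Submodule.span ℂ {v : H | ∃ A ∈ 𝒜, ∃ w : H, v = A w}) : Set H))
    (α : G → (𝒜 ≃⋆ₐ[ℂ] 𝒜))
    (hα1 : ∀ A, α 1 A = A)
    (hαmul : ∀ g h A, α (g * h) A = α g (α h A))
    (Ψ : 𝒜 → (l2 G H →L[ℂ] l2 G H))
    (hΨ : ∀ (A : 𝒜) (ξ : l2 G H) (g : G),
      (Ψ A ξ : ∀ _ : G, H) g = ((α g⁻¹ A : 𝒜) : H →L[ℂ] H) ((ξ : ∀ _ : G, H) g))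
    (L : G → (l2 G H →L[ℂ] l2 G H))
    (hL : ∀ (g : G) (ξ : l2 G H) (h : G),
      (L g ξ : ∀ _ : G, H) h = (ξ : ∀ _ : G, H) (g⁻¹ * h))
    (𝒞 : Set (l2 G H →L[ℂ] l2 G H))
    (h𝒞 : 𝒞 = ((StarAlgebra.adjoin ℂ
        (Set.range Ψ ∪ Set.range L)).topologicalClosure : Set _))
    (ρ : (l2 G H →L[ℂ] l2 G H) → (l2 G (l2 G H) →L[ℂ] l2 G (l2 G H)))
    (hρ : ∀ (X : l2 G H →L[ℂ] l2 G H) (Ξ : l2 G (l2 G H)) (g : G),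
      (ρ X Ξ : ∀ _ : G, l2 G H) g = X ((Ξ : ∀ _ : G, l2 G H) g))
    (V : l2 G H →L[ℂ] l2 G (l2 G H))
    (hV : ∀ (ξ : l2 G H) (g : G),
      (V ξ : ∀ _ : G, l2 G H) g = lp.single 2 g ((ξ : ∀ _ : G, H) g))
    (F : l2 G (l2 G H) →L[ℂ] l2 G (l2 G H))
    (hF : ∀ (Ξ : l2 G (l2 G H)) (g h : G),
      ((F Ξ : ∀ _ : G, l2 G H) g : ∀ _ : G, H) h
        = ((Ξ : ∀ _ : G, l2 G H) h : ∀ _ : G, H) g)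
    :
    ∀ X ∈ 𝒞, ∀ Y ∈ 𝒞, ∀ A : 𝒜,
      hadamard ρ V F X Y * Ψ A = hadamard ρ V F X (Y * Ψ A) ∧
      Ψ A * hadamard ρ V F X Y = hadamard ρ V F (Ψ A * X) Y :=
  hadamard_stmt8_general 𝒜 α Ψ hΨ L 𝒞 ρ hρ V hV F
end
end

section
/- For all X, Y ∈ 𝒞 and all vectors ξ, γ ∈ ℓ²(G,H): |⟨(X ⋆ Y)ξ, γ⟩| ≤ ‖π(XX*)^{1/2}γ‖ · ‖π(Y*Y)^{1/2}ξ‖. -/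
set_option synthInstance.maxHeartbeats 1000000
set_option maxHeartbeats 1000000

open scoped InnerProductSpace
open ContinuousLinearMap

noncomputable section

instance l2_smulCommClass_real {H : Type} [NormedAddCommGroup H] [InnerProductSpace ℂ H] [CompleteSpace H] {G : Type} :
    SMulCommClass ℝ (l2 G H →L[ℂ] l2 G H) (l2 G H →L[ℂ] l2 G H) :=
  ⟨fun a b c => by ext x; simp [smul_eq_mul]⟩

instance l2_isScalarTower_real {H : Type} [NormedAddCommGroup H] [InnerProductSpace ℂ H] [CompleteSpace H] {G : Type} :
    IsScalarTower ℝ (l2 G H →L[ℂ] l2 G H) (l2 G H →L[ℂ] l2 G H) :=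
  ⟨fun a b c => by ext x; simp [smul_eq_mul]⟩

instance l2_cfc_real {H : Type} [NormedAddCommGroup H] [InnerProductSpace ℂ H] [CompleteSpace H] {G : Type} :
    NonUnitalContinuousFunctionalCalculus ℝ (l2 G H →L[ℂ] l2 G H) IsSelfAdjoint :=
  IsSelfAdjoint.instNonUnitalContinuousFunctionalCalculus

instance l2_nonnegSpectrumClass_real {H : Type} [NormedAddCommGroup H] [InnerProductSpace ℂ H] [CompleteSpace H] {G : Type} :
    NonnegSpectrumClass ℝ (l2 G H →L[ℂ] l2 G H) :=
  CStarAlgebra.instNonnegSpectrumClass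

section AuxLemmas

variable {I E : Type} [NormedAddCommGroup E]

lemma l2_summable_sq_s10 (f : lp (fun _ : I => E) 2) :
    Summable fun i => ‖f i‖ ^ 2 := by
  have h := (lp.memℓp f).summable (p := 2) (by norm_num)
  simp only [ENNReal.toReal_ofNat, Real.rpow_two] at h
  exact h

lemma l2_norm_sq_s10 (f : lp (fun _ : I => E) 2) : ‖f‖ ^ 2 = ∑' i, ‖f i‖ ^ 2 := by
  have h := lp.norm_rpow_eq_tsum (p := 2) (by norm_num) f
  simp only [ENNReal.toReal_ofNat, Real.rpow_two] at h
  exact h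

lemma tsum_swap' {A B : Type} {f : A → B → ℝ} (hf : ∀ a b, 0 ≤ f a b)
    (h1 : ∀ a, Summable (f a)) (h2 : ∀ b, Summable fun a => f a b)
    (h3 : Summable fun a => ∑' b, f a b) :
    ∑' a, ∑' b, f a b = ∑' b, ∑' a, f a b := by
  have hs : Summable (fun p : A × B => f p.1 p.2) :=
    (summable_prod_of_nonneg (fun p => hf p.1 p.2)).2 ⟨h1, h3⟩
  have hs' : Summable (fun p : B × A => f p.2 p.1) :=
    ((Equiv.prodComm B A).summable_iff).2 hs
  rw [← Summable.tsum_prod' hs h1, ← Summable.tsum_prod' hs' (fun b => h2 b)]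
  exact ((Equiv.prodComm B A).tsum_eq (fun p : A × B => f p.1 p.2)).symm

lemma F_norm_eq {H : Type} [NormedAddCommGroup H] [InnerProductSpace ℂ H] {G : Type}
    (F : l2 G (l2 G H) →L[ℂ] l2 G (l2 G H))
    (hF : ∀ (Ξ : l2 G (l2 G H)) (g h : G),
      ((F Ξ : ∀ _ : G, l2 G H) g : ∀ _ : G, H) h
        = ((Ξ : ∀ _ : G, l2 G H) h : ∀ _ : G, H) g)
    (Ξ : l2 G (l2 G H)) : ‖F Ξ‖ = ‖Ξ‖ := by
  have hsq : ‖F Ξ‖ ^ 2 = ‖Ξ‖ ^ 2 := by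
    rw [l2_norm_sq_s10, l2_norm_sq_s10]
    have e2 : ∀ h : G, ‖(Ξ : ∀ _ : G, l2 G H) h‖ ^ 2
        = ∑' g : G, ‖((Ξ : ∀ _ : G, l2 G H) h : ∀ _ : G, H) g‖ ^ 2 :=
      fun h => l2_norm_sq_s10 _
    calc ∑' g, ‖(F Ξ : ∀ _ : G, l2 G H) g‖ ^ 2
        = ∑' g, ∑' h, ‖((Ξ : ∀ _ : G, l2 G H) h : ∀ _ : G, H) g‖ ^ 2 := by
          refine tsum_congr fun g => ?_
          rw [l2_norm_sq_s10]
          exact tsum_congr fun h => by rw [hF]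
      _ = ∑' h, ∑' g, ‖((Ξ : ∀ _ : G, l2 G H) h : ∀ _ : G, H) g‖ ^ 2 := by
          refine (tsum_swap'
            (f := fun h g => ‖((Ξ : ∀ _ : G, l2 G H) h : ∀ _ : G, H) g‖ ^ 2)
            (fun _ _ => sq_nonneg _) (fun h => l2_summable_sq_s10 _) (fun g => ?_) ?_).symm
          · refine Summable.of_nonneg_of_le (fun h => sq_nonneg _) (fun h => ?_)
              (l2_summable_sq_s10 Ξ)
            exact pow_le_pow_left₀ (norm_nonneg _)
              (lp.norm_apply_le_norm (by norm_num) _ _) 2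
          · exact (l2_summable_sq_s10 Ξ).congr fun h => e2 h
      _ = ∑' h, ‖(Ξ : ∀ _ : G, l2 G H) h‖ ^ 2 := tsum_congr fun h => (e2 h).symm
  have h1 := Real.sqrt_sq (norm_nonneg (F Ξ))
  have h2 := Real.sqrt_sq (norm_nonneg Ξ)
  rw [← h1, ← h2, hsq]

end AuxLemmas

theorem hadamard_stmt10
    {H : Type} [NormedAddCommGroup H] [InnerProductSpace ℂ H] [CompleteSpace H]
    {G : Type} [Group G] [DecidableEq G]
    (𝒜 : StarSubalgebra ℂ (H →L[ℂ] H))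
    (h𝒜 : IsClosed (𝒜 : Set (H →L[ℂ] H)))
    (hnd : Dense (↑(Submodule.span ℂ {v : H | ∃ A ∈ 𝒜, ∃ w : H, v = A w}) : Set H))
    (α : G → (𝒜 ≃⋆ₐ[ℂ] 𝒜))
    (hα1 : ∀ A, α 1 A = A)
    (hαmul : ∀ g h A, α (g * h) A = α g (α h A))
    (Ψ : 𝒜 → (l2 G H →L[ℂ] l2 G H))
    (hΨ : ∀ (A : 𝒜) (ξ : l2 G H) (g : G),
      (Ψ A ξ : ∀ _ : G, H) g = ((α g⁻¹ A : 𝒜) : H →L[ℂ] H) ((ξ : ∀ _ : G, H) g))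
    (L : G → (l2 G H →L[ℂ] l2 G H))
    (hL : ∀ (g : G) (ξ : l2 G H) (h : G),
      (L g ξ : ∀ _ : G, H) h = (ξ : ∀ _ : G, H) (g⁻¹ * h))
    (𝒞 : Set (l2 G H →L[ℂ] l2 G H))
    (h𝒞 : 𝒞 = ((StarAlgebra.adjoin ℂ
        (Set.range Ψ ∪ Set.range L)).topologicalClosure : Set _))
    (π : (l2 G H →L[ℂ] l2 G H) → (l2 G H →L[ℂ] l2 G H))
    (hπ : ∀ (X : l2 G H →L[ℂ] l2 G H) (ξ η : l2 G H), ⟪π X ξ, η⟫_ℂ =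
      ∑' g : G, ⟪X (lp.single 2 g ((ξ : ∀ _ : G, H) g)),
        lp.single 2 g ((η : ∀ _ : G, H) g)⟫_ℂ)
    (ρ : (l2 G H →L[ℂ] l2 G H) → (l2 G (l2 G H) →L[ℂ] l2 G (l2 G H)))
    (hρ : ∀ (X : l2 G H →L[ℂ] l2 G H) (Ξ : l2 G (l2 G H)) (g : G),
      (ρ X Ξ : ∀ _ : G, l2 G H) g = X ((Ξ : ∀ _ : G, l2 G H) g))
    (V : l2 G H →L[ℂ] l2 G (l2 G H))
    (hV : ∀ (ξ : l2 G H) (g : G),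
      (V ξ : ∀ _ : G, l2 G H) g = lp.single 2 g ((ξ : ∀ _ : G, H) g))
    (F : l2 G (l2 G H) →L[ℂ] l2 G (l2 G H))
    (hF : ∀ (Ξ : l2 G (l2 G H)) (g h : G),
      ((F Ξ : ∀ _ : G, l2 G H) g : ∀ _ : G, H) h
        = ((Ξ : ∀ _ : G, l2 G H) h : ∀ _ : G, H) g)
    :
    ∀ X ∈ 𝒞, ∀ Y ∈ 𝒞, ∀ ξ γ : l2 G H,
      ‖⟪hadamard ρ V F X Y ξ, γ⟫_ℂ‖
        ≤ ‖CFC.sqrt (π (X * star X)) γ‖ * ‖CFC.sqrt (π (star Y * Y)) ξ‖ := by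
  intro X _hX Y _hY ξ γ
  have ρadj : ∀ (Z : l2 G H →L[ℂ] l2 G H) (u w : l2 G (l2 G H)),
      ⟪ρ Z u, w⟫_ℂ = ⟪u, ρ (adjoint Z) w⟫_ℂ := by
    intro Z u w
    rw [lp.inner_eq_tsum, lp.inner_eq_tsum]
    refine tsum_congr fun g => ?_
    rw [hρ, hρ]
    exact (ContinuousLinearMap.adjoint_inner_right Z _ _).symm
  have key : ∀ (Z : l2 G H →L[ℂ] l2 G H) (v : l2 G H),
      ‖ρ Z (V v)‖ = ‖CFC.sqrt (π (star Z * Z)) v‖ := by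
    intro Z v
    have hTinner : ∀ u w : l2 G H,
        ⟪π (star Z * Z) u, w⟫_ℂ = ⟪ρ Z (V u), ρ Z (V w)⟫_ℂ := by
      intro u w
      rw [hπ, lp.inner_eq_tsum]
      refine tsum_congr fun g => ?_
      rw [hρ, hρ, hV, hV, ContinuousLinearMap.mul_apply,
        ContinuousLinearMap.star_eq_adjoint, ContinuousLinearMap.adjoint_inner_left]
    have hA : π (star Z * Z) = adjoint (ρ Z ∘L V) ∘L (ρ Z ∘L V) := by
      refine ContinuousLinearMap.ext fun u => ?_
      refine ext_inner_right ℂ fun w => ?_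
      rw [hTinner]
      simp only [ContinuousLinearMap.comp_apply, ContinuousLinearMap.adjoint_inner_left]
    have hT : 0 ≤ π (star Z * Z) := by
      rw [hA, ContinuousLinearMap.nonneg_iff_isPositive]
      have h1 := (ContinuousLinearMap.isPositive_one
        (E := l2 G (l2 G H)) (𝕜 := ℂ)).adjoint_conj (ρ Z ∘L V)
      have h2 : (1 : l2 G (l2 G H) →L[ℂ] l2 G (l2 G H)) ∘L (ρ Z ∘L V) = ρ Z ∘L V := by
        ext u; simp
      rwa [h2] at h1
    have hS : IsSelfAdjoint (CFC.sqrt (π (star Z * Z))) :=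
      IsSelfAdjoint.of_nonneg (CFC.sqrt_nonneg _)
    have hinner : ⟪ρ Z (V v), ρ Z (V v)⟫_ℂ
        = ⟪CFC.sqrt (π (star Z * Z)) v, CFC.sqrt (π (star Z * Z)) v⟫_ℂ := by
      rw [← hTinner]
      calc ⟪π (star Z * Z) v, v⟫_ℂ
          = ⟪(CFC.sqrt (π (star Z * Z)) * CFC.sqrt (π (star Z * Z))) v, v⟫_ℂ := by
            rw [CFC.sqrt_mul_sqrt_self _ hT]
        _ = ⟪CFC.sqrt (π (star Z * Z)) v, CFC.sqrt (π (star Z * Z)) v⟫_ℂ := by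
            rw [ContinuousLinearMap.mul_apply]
            have h3 := ContinuousLinearMap.adjoint_inner_left
              (CFC.sqrt (π (star Z * Z))) v ((CFC.sqrt (π (star Z * Z))) v)
            rw [← ContinuousLinearMap.star_eq_adjoint, hS.star_eq] at h3
            exact h3
    rw [norm_eq_sqrt_re_inner (𝕜 := ℂ), norm_eq_sqrt_re_inner (𝕜 := ℂ), hinner]
  have expand : ⟪hadamard ρ V F X Y ξ, γ⟫_ℂ
      = ⟪F (ρ Y (V ξ)), ρ (adjoint X) (V γ)⟫_ℂ := by
    show ⟪(adjoint V ∘L (ρ X ∘L (F ∘L (ρ Y ∘L V)))) ξ, γ⟫_ℂ = _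
    simp only [ContinuousLinearMap.comp_apply]
    rw [ContinuousLinearMap.adjoint_inner_left, ρadj]
  rw [expand]
  have harg : star (adjoint X) * adjoint X = X * star X := by
    rw [← ContinuousLinearMap.star_eq_adjoint, star_star]
  calc ‖⟪F (ρ Y (V ξ)), ρ (adjoint X) (V γ)⟫_ℂ‖
      ≤ ‖F (ρ Y (V ξ))‖ * ‖ρ (adjoint X) (V γ)‖ := norm_inner_le_norm _ _
    _ = ‖ρ Y (V ξ)‖ * ‖ρ (adjoint X) (V γ)‖ := by rw [F_norm_eq F hF]
    _ = ‖CFC.sqrt (π (star Y * Y)) ξ‖ * ‖CFC.sqrt (π (X * star X)) γ‖ := by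
        rw [key Y ξ, key (adjoint X) γ, harg]
    _ = _ := mul_comm _ _
end
end

section
/- The Hadamard product is associative on 𝒞: for all X, Y, Z ∈ 𝒞, (X ⋆ Y) ⋆ Z = X ⋆ (Y ⋆ Z). -/
set_option synthInstance.maxHeartbeats 1000000
set_option maxHeartbeats 1000000

open scoped InnerProductSpace
open ContinuousLinearMap

noncomputable section

/-!
Index operators on `ℓ²(G,H)` by matrices of operators on `H`: `X_{g,h} v = (X (δ_h·v))(g)`.
Unwinding `V`, `ρ` and `F` gives `(X ⋆ Y) ξ (g) = X (h ↦ Y_{g,h} (ξ h)) (g)`, so `X ⋆ Y` has entries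
`X_{g,h} ∘ Y_{g,h}`: it is the entrywise (Schur) product of operator matrices, which is
associative because composition in `B(H)` is.
-/

section HadamardAssoc

variable {H : Type} [NormedAddCommGroup H] [InnerProductSpace ℂ H] {G : Type} [DecidableEq G]

def IsAmpliation (ρ : (l2 G H →L[ℂ] l2 G H) → (l2 G (l2 G H) →L[ℂ] l2 G (l2 G H))) : Prop :=
  ∀ (X : l2 G H →L[ℂ] l2 G H) (Ξ : l2 G (l2 G H)) (g : G),
    (ρ X Ξ : ∀ _ : G, l2 G H) g = X ((Ξ : ∀ _ : G, l2 G H) g)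

def IsDiagonalEmbedding (V : l2 G H →L[ℂ] l2 G (l2 G H)) : Prop :=
  ∀ (ξ : l2 G H) (g : G), (V ξ : ∀ _ : G, l2 G H) g = lp.single 2 g ((ξ : ∀ _ : G, H) g)

def IsFlip (F : l2 G (l2 G H) →L[ℂ] l2 G (l2 G H)) : Prop :=
  ∀ (Ξ : l2 G (l2 G H)) (g h : G),
    ((F Ξ : ∀ _ : G, l2 G H) g : ∀ _ : G, H) h = ((Ξ : ∀ _ : G, l2 G H) h : ∀ _ : G, H) g

variable {ρ : (l2 G H →L[ℂ] l2 G H) → (l2 G (l2 G H) →L[ℂ] l2 G (l2 G H))}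
  {V : l2 G H →L[ℂ] l2 G (l2 G H)} {F : l2 G (l2 G H) →L[ℂ] l2 G (l2 G H)}

lemma IsDiagonalEmbedding.apply_single (hV : IsDiagonalEmbedding V) (g : G) (v : H) :
    V (lp.single 2 g v) = lp.single 2 g (lp.single 2 g v) := by
  apply lp.ext
  funext k
  rw [hV, lp.single_apply, lp.single_apply]
  exact Pi.apply_single (fun j (w : H) => (lp.single 2 j w : l2 G H))
    (fun j => lp.single_zero 2 j) g v k

lemma IsDiagonalEmbedding.adjoint_apply [CompleteSpace H] (hV : IsDiagonalEmbedding V)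
    (Ξ : l2 G (l2 G H)) (g : G) :
    (adjoint V Ξ : ∀ _ : G, H) g = ((Ξ : ∀ _ : G, l2 G H) g : ∀ _ : G, H) g := by
  refine ext_inner_left ℂ fun v => ?_
  rw [← lp.inner_single_left g v (adjoint V Ξ), adjoint_inner_right, hV.apply_single,
    lp.inner_single_left, lp.inner_single_left]

lemma hadamard_apply [CompleteSpace H] (hρ : IsAmpliation ρ) (hV : IsDiagonalEmbedding V)
    (X Y : l2 G H →L[ℂ] l2 G H) (ξ : l2 G H) (g : G) :
    (hadamard ρ V F X Y ξ : ∀ _ : G, H) g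
      = (X ((F (ρ Y (V ξ)) : ∀ _ : G, l2 G H) g) : ∀ _ : G, H) g := by
  change (adjoint V (ρ X (F (ρ Y (V ξ)))) : ∀ _ : G, H) g = _
  rw [hV.adjoint_apply, hρ]

lemma flip_ampliation_diag_apply (hρ : IsAmpliation ρ) (hV : IsDiagonalEmbedding V)
    (hF : IsFlip F) (Y : l2 G H →L[ℂ] l2 G H) (ξ : l2 G H) (g h : G) :
    ((F (ρ Y (V ξ)) : ∀ _ : G, l2 G H) g : ∀ _ : G, H) h
      = (Y (lp.single 2 h ((ξ : ∀ _ : G, H) h)) : ∀ _ : G, H) g := by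
  rw [hF, hρ, hV]

lemma flip_ampliation_diag_single (hρ : IsAmpliation ρ) (hV : IsDiagonalEmbedding V)
    (hF : IsFlip F) (Y : l2 G H →L[ℂ] l2 G H) (h : G) (v : H) (g : G) :
    (F (ρ Y (V (lp.single 2 h v))) : ∀ _ : G, l2 G H) g
      = lp.single 2 h ((Y (lp.single 2 h v) : ∀ _ : G, H) g) := by
  apply lp.ext
  funext k
  rw [flip_ampliation_diag_apply hρ hV hF, lp.single_apply, lp.single_apply]
  exact Pi.apply_single (fun j (w : H) => (Y (lp.single 2 j w) : ∀ _ : G, H) g)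
    (fun j => by simp only [lp.single_zero, map_zero, lp.coeFn_zero, Pi.zero_apply]) h v k

lemma hadamard_apply_single [CompleteSpace H] (hρ : IsAmpliation ρ)
    (hV : IsDiagonalEmbedding V) (hF : IsFlip F)
    (X Y : l2 G H →L[ℂ] l2 G H) (h : G) (v : H) (g : G) :
    (hadamard ρ V F X Y (lp.single 2 h v) : ∀ _ : G, H) g
      = (X (lp.single 2 h ((Y (lp.single 2 h v) : ∀ _ : G, H) g)) : ∀ _ : G, H) g := by
  rw [hadamard_apply hρ hV, flip_ampliation_diag_single hρ hV hF]

lemma flip_ampliation_diag_hadamard [CompleteSpace H] (hρ : IsAmpliation ρ)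
    (hV : IsDiagonalEmbedding V) (hF : IsFlip F)
    (Y Z : l2 G H →L[ℂ] l2 G H) (ξ : l2 G H) (g : G) :
    (F (ρ Y (V ((F (ρ Z (V ξ)) : ∀ _ : G, l2 G H) g))) : ∀ _ : G, l2 G H) g
      = (F (ρ (hadamard ρ V F Y Z) (V ξ)) : ∀ _ : G, l2 G H) g := by
  apply lp.ext
  funext h
  rw [flip_ampliation_diag_apply hρ hV hF, flip_ampliation_diag_apply hρ hV hF,
    flip_ampliation_diag_apply hρ hV hF, hadamard_apply_single hρ hV hF]

lemma hadamard_assoc [CompleteSpace H] (hρ : IsAmpliation ρ) (hV : IsDiagonalEmbedding V)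
    (hF : IsFlip F) (X Y Z : l2 G H →L[ℂ] l2 G H) :
    hadamard ρ V F (hadamard ρ V F X Y) Z = hadamard ρ V F X (hadamard ρ V F Y Z) := by
  ext ξ : 1
  apply lp.ext
  funext g
  rw [hadamard_apply hρ hV, hadamard_apply hρ hV, hadamard_apply hρ hV,
    flip_ampliation_diag_hadamard hρ hV hF]

end HadamardAssoc

theorem hadamard_stmt13_general
    {H : Type} [NormedAddCommGroup H] [InnerProductSpace ℂ H] [CompleteSpace H]
    {G : Type} [DecidableEq G]
    (L : G → (l2 G H →L[ℂ] l2 G H))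
    (𝒞 : Set (l2 G H →L[ℂ] l2 G H))
    (ρ : (l2 G H →L[ℂ] l2 G H) → (l2 G (l2 G H) →L[ℂ] l2 G (l2 G H)))
    (hρ : ∀ (X : l2 G H →L[ℂ] l2 G H) (Ξ : l2 G (l2 G H)) (g : G),
      (ρ X Ξ : ∀ _ : G, l2 G H) g = X ((Ξ : ∀ _ : G, l2 G H) g))
    (V : l2 G H →L[ℂ] l2 G (l2 G H))
    (hV : ∀ (ξ : l2 G H) (g : G),
      (V ξ : ∀ _ : G, l2 G H) g = lp.single 2 g ((ξ : ∀ _ : G, H) g))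
    (F : l2 G (l2 G H) →L[ℂ] l2 G (l2 G H))
    (hF : ∀ (Ξ : l2 G (l2 G H)) (g h : G),
      ((F Ξ : ∀ _ : G, l2 G H) g : ∀ _ : G, H) h
        = ((Ξ : ∀ _ : G, l2 G H) h : ∀ _ : G, H) g)
    :
    ∀ X ∈ 𝒞, ∀ Y ∈ 𝒞, ∀ Z ∈ 𝒞,
      hadamard ρ V F (hadamard ρ V F X Y) Z
        = hadamard ρ V F X (hadamard ρ V F Y Z) :=
  fun X _ Y _ Z _ => hadamard_assoc hρ hV hF X Y Z

theorem hadamard_stmt13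
    {H : Type} [NormedAddCommGroup H] [InnerProductSpace ℂ H] [CompleteSpace H]
    {G : Type} [Group G] [DecidableEq G]
    (𝒜 : StarSubalgebra ℂ (H →L[ℂ] H))
    (h𝒜 : IsClosed (𝒜 : Set (H →L[ℂ] H)))
    (hnd : Dense (↑(Submodule.span ℂ {v : H | ∃ A ∈ 𝒜, ∃ w : H, v = A w}) : Set H))
    (α : G → (𝒜 ≃⋆ₐ[ℂ] 𝒜))
    (hα1 : ∀ A, α 1 A = A)
    (hαmul : ∀ g h A, α (g * h) A = α g (α h A))
    (Ψ : 𝒜 → (l2 G H →L[ℂ] l2 G H))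
    (hΨ : ∀ (A : 𝒜) (ξ : l2 G H) (g : G),
      (Ψ A ξ : ∀ _ : G, H) g = ((α g⁻¹ A : 𝒜) : H →L[ℂ] H) ((ξ : ∀ _ : G, H) g))
    (L : G → (l2 G H →L[ℂ] l2 G H))
    (hL : ∀ (g : G) (ξ : l2 G H) (h : G),
      (L g ξ : ∀ _ : G, H) h = (ξ : ∀ _ : G, H) (g⁻¹ * h))
    (𝒞 : Set (l2 G H →L[ℂ] l2 G H))
    (h𝒞 : 𝒞 = ((StarAlgebra.adjoin ℂ
        (Set.range Ψ ∪ Set.range L)).topologicalClosure : Set _))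
    (ρ : (l2 G H →L[ℂ] l2 G H) → (l2 G (l2 G H) →L[ℂ] l2 G (l2 G H)))
    (hρ : ∀ (X : l2 G H →L[ℂ] l2 G H) (Ξ : l2 G (l2 G H)) (g : G),
      (ρ X Ξ : ∀ _ : G, l2 G H) g = X ((Ξ : ∀ _ : G, l2 G H) g))
    (V : l2 G H →L[ℂ] l2 G (l2 G H))
    (hV : ∀ (ξ : l2 G H) (g : G),
      (V ξ : ∀ _ : G, l2 G H) g = lp.single 2 g ((ξ : ∀ _ : G, H) g))
    (F : l2 G (l2 G H) →L[ℂ] l2 G (l2 G H))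
    (hF : ∀ (Ξ : l2 G (l2 G H)) (g h : G),
      ((F Ξ : ∀ _ : G, l2 G H) g : ∀ _ : G, H) h
        = ((Ξ : ∀ _ : G, l2 G H) h : ∀ _ : G, H) g)
    :
    ∀ X ∈ 𝒞, ∀ Y ∈ 𝒞, ∀ Z ∈ 𝒞,
      hadamard ρ V F (hadamard ρ V F X Y) Z
        = hadamard ρ V F X (hadamard ρ V F Y Z) :=
  hadamard_stmt13_general L 𝒞 ρ hρ V hV F hF
end
end

section
/- For all X, Y ∈ 𝒞 there exists a bounded operator S = S(X,Y) on ℓ²(G,H) with ‖S‖ ≤ 1 such that X ⋆ Y = π(XX*)^{1/2} · S · π(Y*Y)^{1/2}. -/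
set_option synthInstance.maxHeartbeats 1000000
set_option maxHeartbeats 1000000

open scoped InnerProductSpace
open ContinuousLinearMap

noncomputable section

instance l2_clm_smulCommClass {H : Type} [NormedAddCommGroup H] [InnerProductSpace ℂ H]
    [CompleteSpace H] {G : Type} :
    SMulCommClass ℝ (l2 G H →L[ℂ] l2 G H) (l2 G H →L[ℂ] l2 G H) :=
  Algebra.to_smulCommClass

instance l2_clm_isScalarTower {H : Type} [NormedAddCommGroup H] [InnerProductSpace ℂ H]
    [CompleteSpace H] {G : Type} :
    IsScalarTower ℝ (l2 G H →L[ℂ] l2 G H) (l2 G H →L[ℂ] l2 G H) :=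
  IsScalarTower.right

instance l2_clm_cfc {H : Type} [NormedAddCommGroup H] [InnerProductSpace ℂ H]
    [CompleteSpace H] {G : Type} :
    NonUnitalContinuousFunctionalCalculus ℝ (l2 G H →L[ℂ] l2 G H) IsSelfAdjoint :=
  IsSelfAdjoint.instNonUnitalContinuousFunctionalCalculus

instance l2_clm_nonnegSpectrumClass {H : Type} [NormedAddCommGroup H] [InnerProductSpace ℂ H]
    [CompleteSpace H] {G : Type} :
    NonnegSpectrumClass ℝ (l2 G H →L[ℂ] l2 G H) :=
  CStarAlgebra.instNonnegSpectrumClass'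

section AuxFactor

open scoped NNReal

variable {E : Type*} [NormedAddCommGroup E] [InnerProductSpace ℂ E] [CompleteSpace E]
variable {F : Type*} [NormedAddCommGroup F] [InnerProductSpace ℂ F] [CompleteSpace F]

/-- If `‖T ξ‖ = ‖R ξ‖` for all `ξ`, then `T = C ∘ R` for some contraction `C`. -/
lemma exists_contraction_factor (T : E →L[ℂ] F) (R : E →L[ℂ] E) (h : ∀ ξ, ‖T ξ‖ = ‖R ξ‖) :
    ∃ C : E →L[ℂ] F, ‖C‖ ≤ 1 ∧ C ∘L R = T := by
  classical
  have hwd : ∀ ξ ξ' : E, R ξ = R ξ' → T ξ = T ξ' := by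
    intro ξ ξ' hR
    have h0 : ‖T ξ - T ξ'‖ = 0 := by
      rw [← map_sub, h, map_sub, hR, sub_self, norm_zero]
    rwa [norm_eq_zero, sub_eq_zero] at h0
  set M : Submodule ℂ E := LinearMap.range (R : E →ₗ[ℂ] E) with hMdef
  have hmem : ∀ y : M, ∃ ξ : E, R ξ = (y : E) := fun y => y.2
  let sec : M → E := fun y => (hmem y).choose
  have hsec : ∀ y : M, R (sec y) = (y : E) := fun y => (hmem y).choose_spec
  let f₀ : M →ₗ[ℂ] F :=
    { toFun := fun y => T (sec y)
      map_add' := by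
        intro y z
        show T (sec (y + z)) = T (sec y) + T (sec z)
        have hkey : R (sec (y + z)) = R (sec y + sec z) := by
          rw [map_add, hsec, hsec, hsec]; rfl
        rw [hwd _ _ hkey, map_add]
      map_smul' := by
        intro c y
        show T (sec (c • y)) = c • T (sec y)
        have hkey : R (sec (c • y)) = R (c • sec y) := by
          rw [map_smul, hsec, hsec]; rfl
        rw [hwd _ _ hkey, map_smul] }
  have hf₀norm : ∀ y : M, ‖f₀ y‖ = ‖y‖ := by
    intro y
    show ‖T (sec y)‖ = ‖y‖
    rw [h, hsec]
    rfl
  let f : M →L[ℂ] F := f₀.mkContinuous 1 (fun y => by rw [hf₀norm, one_mul])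
  have hfapp : ∀ y : M, f y = T (sec y) := fun y => rfl
  set Mc : Submodule ℂ E := M.topologicalClosure with hMc
  have hMcClosed : IsClosed (Mc : Set E) := Submodule.isClosed_topologicalClosure M
  haveI : CompleteSpace Mc := hMcClosed.completeSpace_coe
  let e₀ : M →ₗ[ℂ] Mc := Submodule.inclusion (Submodule.le_topologicalClosure M)
  have he₀norm : ∀ y : M, ‖e₀ y‖ = ‖y‖ := fun y => rfl
  let e : M →L[ℂ] Mc := e₀.mkContinuous 1 (fun y => by rw [he₀norm, one_mul])
  have heapp : ∀ y : M, ((e y : Mc) : E) = (y : E) := fun y => rfl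
  have h_bound : ∀ y : M, ‖y‖ ≤ ((1 : ℝ≥0) : ℝ) * ‖e y‖ := by
    intro y
    have h1 : ‖e y‖ = ‖y‖ := rfl
    rw [h1, NNReal.coe_one, one_mul]
  have h_dense : DenseRange e := by
    intro x
    have hx : (x : E) ∈ closure (M : Set E) := by
      rw [← Submodule.topologicalClosure_coe]
      exact x.2
    rw [closure_subtype] at *
    · convert hx using 2
      ext v
      constructor
      · rintro ⟨w, ⟨y, rfl⟩, rfl⟩
        exact y.2
      · rintro hv
        exact ⟨e ⟨v, hv⟩, ⟨⟨v, hv⟩, rfl⟩, rfl⟩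
  have h_e : IsUniformInducing e := (isUniformEmbedding_of_bound e h_bound).isUniformInducing
  let g : Mc →L[ℂ] F :=
    f.extend e
  have hgnorm : ‖g‖ ≤ 1 := by
    have hle := f.opNorm_extend_le h_dense (N := 1) h_bound
    have hfle : ‖f‖ ≤ 1 := f₀.mkContinuous_norm_le zero_le_one (fun y => by rw [hf₀norm, one_mul])
    calc ‖g‖ ≤ (1 : ℝ≥0) * ‖f‖ := hle
    _ ≤ 1 := by rw [NNReal.coe_one, one_mul]; exact hfle
  refine ⟨g ∘L ((Mc.orthogonalProjectionOnto) : E →L[ℂ] Mc), ?_, ?_⟩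
  · calc ‖g ∘L ((Mc.orthogonalProjectionOnto) : E →L[ℂ] Mc)‖
        ≤ ‖g‖ * ‖(Mc.orthogonalProjectionOnto : E →L[ℂ] Mc)‖ := opNorm_comp_le _ _
    _ ≤ 1 * 1 :=
        mul_le_mul hgnorm (Submodule.orthogonalProjectionOnto_norm_le _)
          (norm_nonneg (Mc.orthogonalProjectionOnto)) zero_le_one
    _ = 1 := one_mul 1
  · ext ξ
    have hmemξ : R ξ ∈ M := ⟨ξ, rfl⟩
    have hproj : (Mc.orthogonalProjectionOnto) (R ξ) = e ⟨R ξ, hmemξ⟩ := by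
      have hmemc : R ξ ∈ Mc := Submodule.le_topologicalClosure M hmemξ
      have h1 : (Mc.orthogonalProjectionOnto) (R ξ) = ⟨R ξ, hmemc⟩ := by
        exact_mod_cast Submodule.orthogonalProjectionOnto_mem_subspace_eq_self (⟨R ξ, hmemc⟩ : Mc)
      rw [h1]
      rfl
    show g ((Mc.orthogonalProjectionOnto) (R ξ)) = T ξ
    rw [hproj]
    have hext := f.extend_eq h_dense h_e ⟨R ξ, hmemξ⟩
    rw [show (f.extend e) = g from rfl] at hext
    rw [hext, hfapp]
    exact (hwd _ _ (by rw [hsec])).symm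

end AuxFactor

section AuxL2

variable {H : Type} [NormedAddCommGroup H] [InnerProductSpace ℂ H] [CompleteSpace H] {G : Type}

lemma l2_sq_summable (Ξ : l2 G (l2 G H)) :
    Summable (fun p : G × G => ‖((Ξ : ∀ _ : G, l2 G H) p.1 : ∀ _ : G, H) p.2‖ ^ 2) := by
  rw [summable_prod_of_nonneg (fun p => by positivity)]
  constructor
  · intro h
    have := (memℓp_gen_iff (p := 2) (by norm_num)).1 (lp.memℓp ((Ξ : ∀ _ : G, l2 G H) h))
    simpa using this
  · have h1 : ∀ h : G, ∑' g, ‖((Ξ : ∀ _ : G, l2 G H) h : ∀ _ : G, H) g‖ ^ 2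
        = ‖(Ξ : ∀ _ : G, l2 G H) h‖ ^ 2 := by
      intro h
      have := lp.norm_rpow_eq_tsum (p := 2) (E := fun _ : G => H) (by norm_num)
        ((Ξ : ∀ _ : G, l2 G H) h)
      norm_num at this
      exact this.symm
    simp only [h1]
    have := (memℓp_gen_iff (p := 2) (by norm_num)).1 (lp.memℓp Ξ)
    simpa using this

lemma l2_inner_summable (Ξ Θ : l2 G (l2 G H)) :
    Summable (fun p : G × G => ⟪((Ξ : ∀ _ : G, l2 G H) p.1 : ∀ _ : G, H) p.2,
      ((Θ : ∀ _ : G, l2 G H) p.1 : ∀ _ : G, H) p.2⟫_ℂ) := by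
  apply Summable.of_norm
  have hbig : Summable (fun p : G × G => (‖((Ξ : ∀ _ : G, l2 G H) p.1 : ∀ _ : G, H) p.2‖ ^ 2
      + ‖((Θ : ∀ _ : G, l2 G H) p.1 : ∀ _ : G, H) p.2‖ ^ 2) / 2) :=
    ((l2_sq_summable Ξ).add (l2_sq_summable Θ)).div_const 2
  apply Summable.of_nonneg_of_le (fun p => norm_nonneg _) ?_ hbig
  · intro p
    set a := ‖((Ξ : ∀ _ : G, l2 G H) p.1 : ∀ _ : G, H) p.2‖
    set b := ‖((Θ : ∀ _ : G, l2 G H) p.1 : ∀ _ : G, H) p.2‖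
    have h1 : ‖⟪((Ξ : ∀ _ : G, l2 G H) p.1 : ∀ _ : G, H) p.2,
        ((Θ : ∀ _ : G, l2 G H) p.1 : ∀ _ : G, H) p.2⟫_ℂ‖ ≤ a * b := norm_inner_le_norm _ _
    have h2 : a * b ≤ (a ^ 2 + b ^ 2) / 2 := by
      nlinarith [sq_nonneg (a - b)]
    linarith

lemma l2_inner_eq_tsum_prod (Ξ Θ : l2 G (l2 G H)) :
    ⟪Ξ, Θ⟫_ℂ = ∑' p : G × G, ⟪((Ξ : ∀ _ : G, l2 G H) p.1 : ∀ _ : G, H) p.2,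
      ((Θ : ∀ _ : G, l2 G H) p.1 : ∀ _ : G, H) p.2⟫_ℂ := by
  have e1 := lp.inner_eq_tsum (𝕜 := ℂ) (G := fun _ : G => l2 G H) Ξ Θ
  have hfib : ∀ h : G, Summable (fun g : G => ⟪((Ξ : ∀ _ : G, l2 G H) h : ∀ _ : G, H) g,
      ((Θ : ∀ _ : G, l2 G H) h : ∀ _ : G, H) g⟫_ℂ) := fun h =>
    lp.summable_inner (𝕜 := ℂ) (G := fun _ : G => H)
      ((Ξ : ∀ _ : G, l2 G H) h) ((Θ : ∀ _ : G, l2 G H) h)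
  have e2 := (l2_inner_summable Ξ Θ).tsum_prod' hfib
  have e3 : ∀ h : G, ⟪(Ξ : ∀ _ : G, l2 G H) h, (Θ : ∀ _ : G, l2 G H) h⟫_ℂ
      = ∑' g : G, ⟪((Ξ : ∀ _ : G, l2 G H) h : ∀ _ : G, H) g,
        ((Θ : ∀ _ : G, l2 G H) h : ∀ _ : G, H) g⟫_ℂ := fun h =>
    lp.inner_eq_tsum (𝕜 := ℂ) (G := fun _ : G => H) _ _
  rw [e1, e2]
  exact tsum_congr e3

/-- The flip operator `F` is inner-product preserving. -/
lemma flip_inner_preserved (F : l2 G (l2 G H) →L[ℂ] l2 G (l2 G H))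
    (hF : ∀ (Ξ : l2 G (l2 G H)) (g h : G),
      ((F Ξ : ∀ _ : G, l2 G H) g : ∀ _ : G, H) h
        = ((Ξ : ∀ _ : G, l2 G H) h : ∀ _ : G, H) g)
    (Ξ Θ : l2 G (l2 G H)) : ⟪F Ξ, F Θ⟫_ℂ = ⟪Ξ, Θ⟫_ℂ := by
  rw [l2_inner_eq_tsum_prod (F Ξ) (F Θ), l2_inner_eq_tsum_prod Ξ Θ]
  have e1 : ∀ p : G × G, ⟪((F Ξ : ∀ _ : G, l2 G H) p.1 : ∀ _ : G, H) p.2,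
      ((F Θ : ∀ _ : G, l2 G H) p.1 : ∀ _ : G, H) p.2⟫_ℂ
      = ⟪((Ξ : ∀ _ : G, l2 G H) p.2 : ∀ _ : G, H) p.1,
        ((Θ : ∀ _ : G, l2 G H) p.2 : ∀ _ : G, H) p.1⟫_ℂ := by
    intro p
    rw [hF, hF]
  rw [tsum_congr e1]
  exact Equiv.tsum_eq (Equiv.prodComm G G)
    (fun p : G × G => ⟪((Ξ : ∀ _ : G, l2 G H) p.1 : ∀ _ : G, H) p.2,
      ((Θ : ∀ _ : G, l2 G H) p.1 : ∀ _ : G, H) p.2⟫_ℂ)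

end AuxL2


section AuxAbstract

variable {E K : Type*} [NormedAddCommGroup E] [InnerProductSpace ℂ E] [CompleteSpace E]
  [NormedAddCommGroup K] [InnerProductSpace ℂ K] [CompleteSpace K]

lemma hadamard_factor_abstract (A' : K →L[ℂ] E) (B : E →L[ℂ] K) (R₁ R₂ : E →L[ℂ] E)
    (hsaP : IsSelfAdjoint R₁) (hsaQ : IsSelfAdjoint R₂)
    (hPA : R₁ ∘L R₁ = A' ∘L adjoint A') (hQB : R₂ ∘L R₂ = adjoint B ∘L B) :
    ∃ S : E →L[ℂ] E, ‖S‖ ≤ 1 ∧ A' ∘L B = R₁ ∘L (S ∘L R₂) := by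
  have hnormP : ∀ η : E, ‖adjoint A' η‖ = ‖R₁ η‖ := by
    intro η
    have hsym := (isSelfAdjoint_iff_isSymmetric.mp hsaP)
    have hinner : ⟪R₁ η, R₁ η⟫_ℂ = ⟪adjoint A' η, adjoint A' η⟫_ℂ := by
      calc ⟪R₁ η, R₁ η⟫_ℂ
          = ⟪η, R₁ (R₁ η)⟫_ℂ := hsym η _
      _ = ⟪η, A' (adjoint A' η)⟫_ℂ := by rw [← comp_apply, hPA]; rfl
      _ = ⟪adjoint A' η, adjoint A' η⟫_ℂ := (adjoint_inner_left A' (adjoint A' η) η).symm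
    have h2 := congrArg RCLike.re hinner
    rw [inner_self_eq_norm_sq, inner_self_eq_norm_sq] at h2
    exact ((sq_eq_sq₀ (norm_nonneg _) (norm_nonneg _)).mp h2).symm
  have hnormQ : ∀ ξ : E, ‖B ξ‖ = ‖R₂ ξ‖ := by
    intro ξ
    have hsym := (isSelfAdjoint_iff_isSymmetric.mp hsaQ)
    have hinner : ⟪R₂ ξ, R₂ ξ⟫_ℂ = ⟪B ξ, B ξ⟫_ℂ := by
      calc ⟪R₂ ξ, R₂ ξ⟫_ℂ
          = ⟪ξ, R₂ (R₂ ξ)⟫_ℂ := hsym ξ _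
      _ = ⟪ξ, adjoint B (B ξ)⟫_ℂ := by rw [← comp_apply, hQB]; rfl
      _ = ⟪B ξ, B ξ⟫_ℂ := adjoint_inner_right B ξ (B ξ)
    have h2 := congrArg RCLike.re hinner
    rw [inner_self_eq_norm_sq, inner_self_eq_norm_sq] at h2
    exact ((sq_eq_sq₀ (norm_nonneg _) (norm_nonneg _)).mp h2).symm
  obtain ⟨D, hD1, hD2⟩ := exists_contraction_factor (adjoint A') R₁ hnormP
  obtain ⟨C₂, hC1, hC2⟩ := exists_contraction_factor B R₂ hnormQ
  have hA'eq : A' = R₁ ∘L adjoint D := by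
    have h3 := congrArg adjoint hD2
    rw [adjoint_comp, adjoint_adjoint, hsaP.adjoint_eq] at h3
    exact h3.symm
  refine ⟨adjoint D ∘L C₂, ?_, ?_⟩
  · calc ‖adjoint D ∘L C₂‖ ≤ ‖adjoint D‖ * ‖C₂‖ := opNorm_comp_le _ _
    _ ≤ 1 * 1 := by
        have hDadj : ‖adjoint D‖ = ‖D‖ :=
          LinearIsometryEquiv.norm_map ContinuousLinearMap.adjoint D
        rw [hDadj]
        exact mul_le_mul hD1 hC1 (norm_nonneg _) zero_le_one
    _ = 1 := one_mul 1
  · rw [hA'eq, ← hC2]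
    ext ξ
    rfl

end AuxAbstract

set_option maxHeartbeats 4000000 in
theorem hadamard_stmt14
    {H : Type} [NormedAddCommGroup H] [InnerProductSpace ℂ H] [CompleteSpace H]
    {G : Type} [Group G] [DecidableEq G]
    (𝒜 : StarSubalgebra ℂ (H →L[ℂ] H))
    (h𝒜 : IsClosed (𝒜 : Set (H →L[ℂ] H)))
    (hnd : Dense (↑(Submodule.span ℂ {v : H | ∃ A ∈ 𝒜, ∃ w : H, v = A w}) : Set H))
    (α : G → (𝒜 ≃⋆ₐ[ℂ] 𝒜))
    (hα1 : ∀ A, α 1 A = A)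
    (hαmul : ∀ g h A, α (g * h) A = α g (α h A))
    (Ψ : 𝒜 → (l2 G H →L[ℂ] l2 G H))
    (hΨ : ∀ (A : 𝒜) (ξ : l2 G H) (g : G),
      (Ψ A ξ : ∀ _ : G, H) g = ((α g⁻¹ A : 𝒜) : H →L[ℂ] H) ((ξ : ∀ _ : G, H) g))
    (L : G → (l2 G H →L[ℂ] l2 G H))
    (hL : ∀ (g : G) (ξ : l2 G H) (h : G),
      (L g ξ : ∀ _ : G, H) h = (ξ : ∀ _ : G, H) (g⁻¹ * h))
    (𝒞 : Set (l2 G H →L[ℂ] l2 G H))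
    (h𝒞 : 𝒞 = ((StarAlgebra.adjoin ℂ
        (Set.range Ψ ∪ Set.range L)).topologicalClosure : Set _))
    (π : (l2 G H →L[ℂ] l2 G H) → (l2 G H →L[ℂ] l2 G H))
    (hπ : ∀ (X : l2 G H →L[ℂ] l2 G H) (ξ η : l2 G H), ⟪π X ξ, η⟫_ℂ =
      ∑' g : G, ⟪X (lp.single 2 g ((ξ : ∀ _ : G, H) g)),
        lp.single 2 g ((η : ∀ _ : G, H) g)⟫_ℂ)
    (ρ : (l2 G H →L[ℂ] l2 G H) → (l2 G (l2 G H) →L[ℂ] l2 G (l2 G H)))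
    (hρ : ∀ (X : l2 G H →L[ℂ] l2 G H) (Ξ : l2 G (l2 G H)) (g : G),
      (ρ X Ξ : ∀ _ : G, l2 G H) g = X ((Ξ : ∀ _ : G, l2 G H) g))
    (V : l2 G H →L[ℂ] l2 G (l2 G H))
    (hV : ∀ (ξ : l2 G H) (g : G),
      (V ξ : ∀ _ : G, l2 G H) g = lp.single 2 g ((ξ : ∀ _ : G, H) g))
    (F : l2 G (l2 G H) →L[ℂ] l2 G (l2 G H))
    (hF : ∀ (Ξ : l2 G (l2 G H)) (g h : G),
      ((F Ξ : ∀ _ : G, l2 G H) g : ∀ _ : G, H) h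
        = ((Ξ : ∀ _ : G, l2 G H) h : ∀ _ : G, H) g)
    :
    ∀ X ∈ 𝒞, ∀ Y ∈ 𝒞, ∃ S : l2 G H →L[ℂ] l2 G H, ‖S‖ ≤ 1 ∧
      hadamard ρ V F X Y
        = CFC.sqrt (π (X * star X)) * S * CFC.sqrt (π (star Y * Y)) := by
  intro X _ Y _
  have hρ_mul : ∀ W Z : l2 G H →L[ℂ] l2 G H, ρ W ∘L ρ Z = ρ (W ∘L Z) := by
    intro W Z
    refine ContinuousLinearMap.ext fun Ξ => lp.ext (funext fun g => ?_)
    show ((ρ W) ((ρ Z) Ξ) : ∀ _ : G, l2 G H) g = ((ρ (W ∘L Z)) Ξ : ∀ _ : G, l2 G H) g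
    rw [hρ, hρ, hρ]
    rfl
  have hip2 : ∀ Ξ Θ : l2 G (l2 G H), ⟪Ξ, Θ⟫_ℂ
      = ∑' g : G, ⟪(Ξ : ∀ _ : G, l2 G H) g, (Θ : ∀ _ : G, l2 G H) g⟫_ℂ :=
    fun Ξ Θ => lp.inner_eq_tsum (𝕜 := ℂ) (G := fun _ : G => l2 G H) Ξ Θ
  have hρ_adj : ∀ W : l2 G H →L[ℂ] l2 G H, ρ (adjoint W) = adjoint (ρ W) := by
    intro W
    rw [eq_adjoint_iff]
    intro Ξ Θ
    rw [hip2, hip2]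
    refine tsum_congr fun g => ?_
    rw [hρ, hρ]
    exact adjoint_inner_left W _ _
  have hπ_eq : ∀ Z : l2 G H →L[ℂ] l2 G H, π Z = adjoint V ∘L (ρ Z ∘L V) := by
    intro Z
    refine ContinuousLinearMap.ext fun ξ => ext_inner_right ℂ fun η => ?_
    rw [hπ]
    show _ = ⟪adjoint V ((ρ Z) (V ξ)), η⟫_ℂ
    rw [adjoint_inner_left, hip2]
    refine tsum_congr fun g => ?_
    rw [hρ, hV, hV]
  have hFF : adjoint F ∘L F = 1 := by
    refine ContinuousLinearMap.ext fun Ξ => ext_inner_right ℂ fun Θ => ?_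
    show ⟪adjoint F (F Ξ), Θ⟫_ℂ = ⟪(1 : l2 G (l2 G H) →L[ℂ] l2 G (l2 G H)) Ξ, Θ⟫_ℂ
    rw [adjoint_inner_left, flip_inner_preserved F hF Ξ Θ]
    rfl
  set A' : l2 G (l2 G H) →L[ℂ] l2 G H := adjoint V ∘L ρ X with hA'def
  set B : l2 G H →L[ℂ] l2 G (l2 G H) := F ∘L (ρ Y ∘L V) with hBdef
  have hA'adj : adjoint A' = ρ (star X) ∘L V := by
    rw [hA'def, adjoint_comp, adjoint_adjoint, star_eq_adjoint, hρ_adj]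
  have hBadj : adjoint B = (adjoint V ∘L ρ (star Y)) ∘L adjoint F := by
    rw [hBdef, adjoint_comp, adjoint_comp, star_eq_adjoint, hρ_adj]
  have hPA : π (X * star X) = A' ∘L adjoint A' := by
    rw [hπ_eq, hA'adj, mul_def, ← hρ_mul]
    ext ξ
    rfl
  have hQB : π (star Y * Y) = adjoint B ∘L B := by
    rw [hπ_eq, hBadj, mul_def, ← hρ_mul]
    have hassoc : ((adjoint V ∘L ρ (star Y)) ∘L adjoint F) ∘L (F ∘L (ρ Y ∘L V))
        = adjoint V ∘L (ρ (star Y) ∘L ((adjoint F ∘L F) ∘L (ρ Y ∘L V))) := by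
      ext ξ; rfl
    rw [hassoc, hFF]
    ext ξ
    rfl
  have hP0 : 0 ≤ π (X * star X) := by
    rw [nonneg_iff_isPositive, hPA]
    have h1 := (isPositive_one (𝕜 := ℂ) (E := l2 G (l2 G H))).conj_adjoint A'
    have h2 : A' ∘L (1 : l2 G (l2 G H) →L[ℂ] l2 G (l2 G H)) ∘L adjoint A'
        = A' ∘L adjoint A' := by ext ξ; rfl
    rwa [h2] at h1
  have hQ0 : 0 ≤ π (star Y * Y) := by
    rw [nonneg_iff_isPositive, hQB]
    have h1 := (isPositive_one (𝕜 := ℂ) (E := l2 G (l2 G H))).conj_adjoint (adjoint B)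
    have h2 : adjoint B ∘L (1 : l2 G (l2 G H) →L[ℂ] l2 G (l2 G H)) ∘L adjoint (adjoint B)
        = adjoint B ∘L B := by rw [adjoint_adjoint]; ext ξ; rfl
    rwa [h2] at h1
  have hsP : CFC.sqrt (π (X * star X)) ∘L CFC.sqrt (π (X * star X)) = A' ∘L adjoint A' := by
    rw [← hPA, ← mul_def, CFC.sqrt_mul_sqrt_self _ hP0]
  have hsQ : CFC.sqrt (π (star Y * Y)) ∘L CFC.sqrt (π (star Y * Y)) = adjoint B ∘L B := by
    rw [← hQB, ← mul_def, CFC.sqrt_mul_sqrt_self _ hQ0]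
  have hsaP : IsSelfAdjoint (CFC.sqrt (π (X * star X))) :=
    (CFC.sqrt_nonneg (a := π (X * star X))).isSelfAdjoint
  have hsaQ : IsSelfAdjoint (CFC.sqrt (π (star Y * Y))) :=
    (CFC.sqrt_nonneg (a := π (star Y * Y))).isSelfAdjoint
  obtain ⟨S, hS1, hS2⟩ := hadamard_factor_abstract A' B
    (CFC.sqrt (π (X * star X))) (CFC.sqrt (π (star Y * Y))) hsaP hsaQ hsP hsQ
  refine ⟨S, hS1, ?_⟩
  have hlhs : hadamard ρ V F X Y = A' ∘L B := by ext ξ; rfl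
  rw [hlhs, hS2, mul_def, mul_def]
  ext ξ
  rfl
end
end

section
/- Livshits' inequality extends to the Hadamard product: for all X, Y ∈ 𝒞, ‖X ⋆ Y‖ ≤ ‖π(XX*)‖^{1/2} · ‖π(Y*Y)‖^{1/2}. -/
set_option synthInstance.maxHeartbeats 1000000
set_option maxHeartbeats 1000000

open scoped InnerProductSpace
open ContinuousLinearMap

noncomputable section

/-!
The Hadamard product factors as `X ⋆ Y = (ρ(X*) V)* ∘ F ∘ (ρ(Y) V)`. The flip `F` is an isometry,
since transposing a square-summable double family does not change its `ℓ²` norm, and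
`‖ρ(Z) V ξ‖² = ∑_g ‖Z (δ_g · ξ(g))‖² = ⟨π(Z*Z) ξ, ξ⟩ ≤ ‖π(Z*Z)‖ ‖ξ‖²`.
Applied to `Z = X*` and `Z = Y` this bounds the two outer factors.
-/

theorem tsum_comm_of_nonneg {α β : Type*} {f : α → β → ℝ} (hf : ∀ a b, 0 ≤ f a b)
    (h₁ : ∀ a, Summable (f a)) (h₂ : ∀ b, Summable fun a ↦ f a b)
    (h : Summable fun a ↦ ∑' b, f a b) :
    ∑' b, ∑' a, f a b = ∑' a, ∑' b, f a b :=
  ((summable_prod_of_nonneg fun p ↦ hf p.1 p.2).2 ⟨h₁, h⟩).tsum_comm' h₁ h₂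

namespace lp

section Norm

variable {ι : Type*} {E : ι → Type*} [∀ i, NormedAddCommGroup (E i)]

theorem norm_sq_eq_tsum (f : lp E 2) : ‖f‖ ^ 2 = ∑' i, ‖f i‖ ^ 2 := by
  simpa using lp.norm_rpow_eq_tsum (p := 2) (by norm_num) f

theorem summable_norm_sq (f : lp E 2) : Summable fun i ↦ ‖f i‖ ^ 2 := by
  simpa using (lp.memℓp f).summable (p := 2) (by norm_num)

end Norm

theorem norm_eq_of_transpose {ι κ E : Type*} [NormedAddCommGroup E]
    {Θ : lp (fun _ : ι ↦ lp (fun _ : κ ↦ E) 2) 2} {Θ' : lp (fun _ : κ ↦ lp (fun _ : ι ↦ E) 2) 2}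
    (h : ∀ j i, Θ' j i = Θ i j) : ‖Θ'‖ = ‖Θ‖ := by
  have hsq : ‖Θ'‖ ^ 2 = ‖Θ‖ ^ 2 := by
    calc ‖Θ'‖ ^ 2 = ∑' j, ∑' i, ‖Θ i j‖ ^ 2 := by
          simp only [norm_sq_eq_tsum Θ', norm_sq_eq_tsum (Θ' _), h]
      _ = ∑' i, ∑' j, ‖Θ i j‖ ^ 2 :=
        tsum_comm_of_nonneg (fun _ _ ↦ by positivity) (fun i ↦ summable_norm_sq (Θ i))
          (fun j ↦ by simpa only [h] using summable_norm_sq (Θ' j))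
          (by simpa only [norm_sq_eq_tsum] using summable_norm_sq Θ)
      _ = ‖Θ‖ ^ 2 := by simp only [norm_sq_eq_tsum Θ, norm_sq_eq_tsum (Θ _)]
  exact (pow_left_inj₀ (norm_nonneg _) (norm_nonneg _) two_ne_zero).1 hsq

theorem eq_adjoint_of_apply {𝕜 ι E F : Type*} [RCLike 𝕜]
    [NormedAddCommGroup E] [InnerProductSpace 𝕜 E] [CompleteSpace E]
    [NormedAddCommGroup F] [InnerProductSpace 𝕜 F] [CompleteSpace F]
    {Z : E →L[𝕜] F} {T : lp (fun _ : ι ↦ E) 2 →L[𝕜] lp (fun _ : ι ↦ F) 2}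
    {S : lp (fun _ : ι ↦ F) 2 →L[𝕜] lp (fun _ : ι ↦ E) 2}
    (hT : ∀ x i, T x i = Z (x i)) (hS : ∀ y i, S y i = adjoint Z (y i)) :
    T = adjoint S :=
  (eq_adjoint_iff T S).2 fun x y ↦ by
    simp only [lp.inner_eq_tsum, hT, hS, adjoint_inner_right]

end lp

section Hadamard

variable {H : Type} [NormedAddCommGroup H] [InnerProductSpace ℂ H] [CompleteSpace H]
  {G : Type} {π : (l2 G H →L[ℂ] l2 G H) → (l2 G H →L[ℂ] l2 G H)}
  {ρ : (l2 G H →L[ℂ] l2 G H) → (l2 G (l2 G H) →L[ℂ] l2 G (l2 G H))}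
  {V : l2 G H →L[ℂ] l2 G (l2 G H)}

theorem norm_sq_apply_diag_eq_re_inner_compression [DecidableEq G]
    (hπ : ∀ (X : l2 G H →L[ℂ] l2 G H) (ξ η : l2 G H),
      ⟪π X ξ, η⟫_ℂ = ∑' g : G, ⟪X (lp.single 2 g (ξ g)), lp.single 2 g (η g)⟫_ℂ)
    (hρ : ∀ (X : l2 G H →L[ℂ] l2 G H) (Ξ : l2 G (l2 G H)) (g : G), ρ X Ξ g = X (Ξ g))
    (hV : ∀ (ξ : l2 G H) (g : G), V ξ g = lp.single 2 g (ξ g))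
    (Z : l2 G H →L[ℂ] l2 G H) (ξ : l2 G H) :
    ‖ρ Z (V ξ)‖ ^ 2 = (⟪π (star Z * Z) ξ, ξ⟫_ℂ).re := by
  have hdiag : ⟪π (star Z * Z) ξ, ξ⟫_ℂ = ((∑' g, ‖Z (lp.single 2 g (ξ g))‖ ^ 2 : ℝ) : ℂ) := by
    rw [hπ, Complex.ofReal_tsum]
    refine tsum_congr fun g ↦ ?_
    rw [mul_apply_eq_comp, star_eq_adjoint, adjoint_inner_left, inner_self_eq_norm_sq_to_K]
    norm_cast
  rw [hdiag, Complex.ofReal_re, lp.norm_sq_eq_tsum]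
  simp only [hρ, hV]

theorem norm_comp_le_sqrt_norm_compression [DecidableEq G]
    (hπ : ∀ (X : l2 G H →L[ℂ] l2 G H) (ξ η : l2 G H),
      ⟪π X ξ, η⟫_ℂ = ∑' g : G, ⟪X (lp.single 2 g (ξ g)), lp.single 2 g (η g)⟫_ℂ)
    (hρ : ∀ (X : l2 G H →L[ℂ] l2 G H) (Ξ : l2 G (l2 G H)) (g : G), ρ X Ξ g = X (Ξ g))
    (hV : ∀ (ξ : l2 G H) (g : G), V ξ g = lp.single 2 g (ξ g))
    (Z : l2 G H →L[ℂ] l2 G H) :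
    ‖ρ Z ∘L V‖ ≤ √‖π (star Z * Z)‖ := by
  refine opNorm_le_bound _ (Real.sqrt_nonneg _) fun ξ ↦ ?_
  rw [← pow_le_pow_iff_left₀ (norm_nonneg _) (by positivity) two_ne_zero, mul_pow,
    Real.sq_sqrt (norm_nonneg _), comp_apply,
    norm_sq_apply_diag_eq_re_inner_compression hπ hρ hV]
  calc (⟪π (star Z * Z) ξ, ξ⟫_ℂ).re ≤ ‖π (star Z * Z) ξ‖ * ‖ξ‖ :=
        (Complex.re_le_norm _).trans (norm_inner_le_norm _ _)
    _ ≤ ‖π (star Z * Z)‖ * ‖ξ‖ ^ 2 := by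
        rw [sq, ← mul_assoc]
        gcongr
        exact le_opNorm _ _

theorem hadamard_eq_adjoint_comp
    (hρ : ∀ (X : l2 G H →L[ℂ] l2 G H) (Ξ : l2 G (l2 G H)) (g : G), ρ X Ξ g = X (Ξ g))
    (F : l2 G (l2 G H) →L[ℂ] l2 G (l2 G H)) (X Y : l2 G H →L[ℂ] l2 G H) :
    hadamard ρ V F X Y = adjoint (ρ (adjoint X) ∘L V) ∘L F ∘L (ρ Y ∘L V) := by
  rw [hadamard, adjoint_comp, ← lp.eq_adjoint_of_apply (hρ X) (hρ (adjoint X))]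
  rfl

end Hadamard

theorem hadamard_stmt16_general
    {H : Type} [NormedAddCommGroup H] [InnerProductSpace ℂ H] [CompleteSpace H]
    {G : Type} [DecidableEq G]
    (L : G → (l2 G H →L[ℂ] l2 G H))
    (𝒞 : Set (l2 G H →L[ℂ] l2 G H))
    (π : (l2 G H →L[ℂ] l2 G H) → (l2 G H →L[ℂ] l2 G H))
    (hπ : ∀ (X : l2 G H →L[ℂ] l2 G H) (ξ η : l2 G H), ⟪π X ξ, η⟫_ℂ =
      ∑' g : G, ⟪X (lp.single 2 g ((ξ : ∀ _ : G, H) g)),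
        lp.single 2 g ((η : ∀ _ : G, H) g)⟫_ℂ)
    (ρ : (l2 G H →L[ℂ] l2 G H) → (l2 G (l2 G H) →L[ℂ] l2 G (l2 G H)))
    (hρ : ∀ (X : l2 G H →L[ℂ] l2 G H) (Ξ : l2 G (l2 G H)) (g : G),
      (ρ X Ξ : ∀ _ : G, l2 G H) g = X ((Ξ : ∀ _ : G, l2 G H) g))
    (V : l2 G H →L[ℂ] l2 G (l2 G H))
    (hV : ∀ (ξ : l2 G H) (g : G),
      (V ξ : ∀ _ : G, l2 G H) g = lp.single 2 g ((ξ : ∀ _ : G, H) g))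
    (F : l2 G (l2 G H) →L[ℂ] l2 G (l2 G H))
    (hF : ∀ (Ξ : l2 G (l2 G H)) (g h : G),
      ((F Ξ : ∀ _ : G, l2 G H) g : ∀ _ : G, H) h
        = ((Ξ : ∀ _ : G, l2 G H) h : ∀ _ : G, H) g)
    :
    ∀ X ∈ 𝒞, ∀ Y ∈ 𝒞,
      ‖hadamard ρ V F X Y‖
        ≤ Real.sqrt ‖π (X * star X)‖ * Real.sqrt ‖π (star Y * Y)‖ := by
  intro X _ Y _
  have hF_le : ‖F‖ ≤ 1 :=
    opNorm_le_bound _ zero_le_one fun Θ ↦ (lp.norm_eq_of_transpose (hF Θ)).trans_le (one_mul _).ge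
  have hX : star (adjoint X) * adjoint X = X * star X := by
    rw [star_eq_adjoint, adjoint_adjoint, star_eq_adjoint]
  rw [hadamard_eq_adjoint_comp hρ]
  calc ‖adjoint (ρ (adjoint X) ∘L V) ∘L F ∘L (ρ Y ∘L V)‖
      ≤ ‖ρ (adjoint X) ∘L V‖ * (‖F‖ * ‖ρ Y ∘L V‖) := by
        refine (opNorm_comp_le _ _).trans ?_
        rw [LinearIsometryEquiv.norm_map]
        gcongr
        exact opNorm_comp_le _ _
    _ ≤ √‖π (X * star X)‖ * (1 * √‖π (star Y * Y)‖) := by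
        rw [← hX]
        gcongr <;> exact norm_comp_le_sqrt_norm_compression hπ hρ hV _
    _ = _ := by rw [one_mul]

theorem hadamard_stmt16
    {H : Type} [NormedAddCommGroup H] [InnerProductSpace ℂ H] [CompleteSpace H]
    {G : Type} [Group G] [DecidableEq G]
    (𝒜 : StarSubalgebra ℂ (H →L[ℂ] H))
    (h𝒜 : IsClosed (𝒜 : Set (H →L[ℂ] H)))
    (hnd : Dense (↑(Submodule.span ℂ {v : H | ∃ A ∈ 𝒜, ∃ w : H, v = A w}) : Set H))
    (α : G → (𝒜 ≃⋆ₐ[ℂ] 𝒜))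
    (hα1 : ∀ A, α 1 A = A)
    (hαmul : ∀ g h A, α (g * h) A = α g (α h A))
    (Ψ : 𝒜 → (l2 G H →L[ℂ] l2 G H))
    (hΨ : ∀ (A : 𝒜) (ξ : l2 G H) (g : G),
      (Ψ A ξ : ∀ _ : G, H) g = ((α g⁻¹ A : 𝒜) : H →L[ℂ] H) ((ξ : ∀ _ : G, H) g))
    (L : G → (l2 G H →L[ℂ] l2 G H))
    (hL : ∀ (g : G) (ξ : l2 G H) (h : G),
      (L g ξ : ∀ _ : G, H) h = (ξ : ∀ _ : G, H) (g⁻¹ * h))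
    (𝒞 : Set (l2 G H →L[ℂ] l2 G H))
    (h𝒞 : 𝒞 = ((StarAlgebra.adjoin ℂ
        (Set.range Ψ ∪ Set.range L)).topologicalClosure : Set _))
    (π : (l2 G H →L[ℂ] l2 G H) → (l2 G H →L[ℂ] l2 G H))
    (hπ : ∀ (X : l2 G H →L[ℂ] l2 G H) (ξ η : l2 G H), ⟪π X ξ, η⟫_ℂ =
      ∑' g : G, ⟪X (lp.single 2 g ((ξ : ∀ _ : G, H) g)),
        lp.single 2 g ((η : ∀ _ : G, H) g)⟫_ℂ)
    (ρ : (l2 G H →L[ℂ] l2 G H) → (l2 G (l2 G H) →L[ℂ] l2 G (l2 G H)))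
    (hρ : ∀ (X : l2 G H →L[ℂ] l2 G H) (Ξ : l2 G (l2 G H)) (g : G),
      (ρ X Ξ : ∀ _ : G, l2 G H) g = X ((Ξ : ∀ _ : G, l2 G H) g))
    (V : l2 G H →L[ℂ] l2 G (l2 G H))
    (hV : ∀ (ξ : l2 G H) (g : G),
      (V ξ : ∀ _ : G, l2 G H) g = lp.single 2 g ((ξ : ∀ _ : G, H) g))
    (F : l2 G (l2 G H) →L[ℂ] l2 G (l2 G H))
    (hF : ∀ (Ξ : l2 G (l2 G H)) (g h : G),
      ((F Ξ : ∀ _ : G, l2 G H) g : ∀ _ : G, H) h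
        = ((Ξ : ∀ _ : G, l2 G H) h : ∀ _ : G, H) g)
    :
    ∀ X ∈ 𝒞, ∀ Y ∈ 𝒞,
      ‖hadamard ρ V F X Y‖
        ≤ Real.sqrt ‖π (X * star X)‖ * Real.sqrt ‖π (star Y * Y)‖ :=
  hadamard_stmt16_general L 𝒞 π hπ ρ hρ V hV F hF
end
end

section
/- The block Schur product is a special case of the Hadamard product: for all X, Y ∈ B(ℓ²(C_n,H)) and all i, j ∈ C_n, the matrix entries satisfy (X ⋆ Y)_{ij} = X_{ij}·Y_{ij}; that is, X ⋆ Y equals the block Schur product X □ Y. -/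
set_option synthInstance.maxHeartbeats 1000000
set_option maxHeartbeats 1000000

open scoped InnerProductSpace
open ContinuousLinearMap

noncomputable section

theorem hadamard_stmt18
    {H : Type} [NormedAddCommGroup H] [InnerProductSpace ℂ H] [CompleteSpace H]
    (n : ℕ) (hn : 0 < n)
    (ρ : (l2 (ZMod n) H →L[ℂ] l2 (ZMod n) H) →
      (l2 (ZMod n) (l2 (ZMod n) H) →L[ℂ] l2 (ZMod n) (l2 (ZMod n) H)))
    (hρ : ∀ (X : l2 (ZMod n) H →L[ℂ] l2 (ZMod n) H)
        (Ξ : l2 (ZMod n) (l2 (ZMod n) H)) (g : ZMod n),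
      (ρ X Ξ : ∀ _ : ZMod n, l2 (ZMod n) H) g = X ((Ξ : ∀ _ : ZMod n, l2 (ZMod n) H) g))
    (V : l2 (ZMod n) H →L[ℂ] l2 (ZMod n) (l2 (ZMod n) H))
    (hV : ∀ (ξ : l2 (ZMod n) H) (g : ZMod n),
      (V ξ : ∀ _ : ZMod n, l2 (ZMod n) H) g = lp.single 2 g ((ξ : ∀ _ : ZMod n, H) g))
    (F : l2 (ZMod n) (l2 (ZMod n) H) →L[ℂ] l2 (ZMod n) (l2 (ZMod n) H))
    (hF : ∀ (Ξ : l2 (ZMod n) (l2 (ZMod n) H)) (g h : ZMod n),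
      ((F Ξ : ∀ _ : ZMod n, l2 (ZMod n) H) g : ∀ _ : ZMod n, H) h
        = ((Ξ : ∀ _ : ZMod n, l2 (ZMod n) H) h : ∀ _ : ZMod n, H) g)
    :
    ∀ (X Y : l2 (ZMod n) H →L[ℂ] l2 (ZMod n) H) (i j : ZMod n) (v : H),
      (hadamard ρ V F X Y (lp.single 2 j v) : ∀ _ : ZMod n, H) i
        = (X (lp.single 2 j ((Y (lp.single 2 j v) : ∀ _ : ZMod n, H) i))
            : ∀ _ : ZMod n, H) i := by
  intro X Y i j v
  classical
  set ξ : l2 (ZMod n) H := lp.single 2 j v with hξ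
  have key : ∀ g : ZMod n,
      ((ρ X (F (ρ Y (V ξ))) : ∀ _ : ZMod n, l2 (ZMod n) H)) g
        = X (lp.single 2 j ((Y ξ : ∀ _ : ZMod n, H) g)) := by
    intro g
    rw [hρ]
    congr 1
    apply lp.ext
    funext h
    have h1 : ((F (ρ Y (V ξ)) : ∀ _ : ZMod n, l2 (ZMod n) H) g : ∀ _ : ZMod n, H) h
        = ((Y ((V ξ : ∀ _ : ZMod n, l2 (ZMod n) H) h) : ∀ _ : ZMod n, H)) g := by
      rw [hF, hρ]
    rw [h1, hV]
    by_cases hhj : h = j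
    · subst hhj
      rw [lp.single_apply_self, lp.single_apply_self]
    · rw [lp.single_apply_ne _ _ _ hhj, lp.single_apply_ne 2 j _ hhj]
      have hz : (lp.single 2 h (0 : H) : l2 (ZMod n) H) = 0 := by
        apply lp.ext; funext k; rw [lp.single_apply]; simp
      rw [hz, map_zero]
      simp
  have hV' : ∀ (Ξ : l2 (ZMod n) (l2 (ZMod n) H)) (g : ZMod n),
      ((adjoint V) Ξ : ∀ _ : ZMod n, H) g
        = ((Ξ : ∀ _ : ZMod n, l2 (ZMod n) H) g : ∀ _ : ZMod n, H) g := by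
    intro Ξ g
    apply ext_inner_left ℂ
    intro w
    have h2 : (⟪w, ((adjoint V) Ξ : ∀ _ : ZMod n, H) g⟫_ℂ)
        = ⟪lp.single 2 g w, (adjoint V) Ξ⟫_ℂ := (lp.inner_single_left (𝕜 := ℂ) g w ((adjoint V) Ξ)).symm
    rw [h2, adjoint_inner_right, lp.inner_eq_tsum]
    have h3 : ∀ b : ZMod n,
        (⟪(V (lp.single 2 g w) : ∀ _ : ZMod n, l2 (ZMod n) H) b,
          (Ξ : ∀ _ : ZMod n, l2 (ZMod n) H) b⟫_ℂ)
        = if b = g then ⟪w, ((Ξ : ∀ _ : ZMod n, l2 (ZMod n) H) g : ∀ _ : ZMod n, H) g⟫_ℂ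
          else 0 := by
      intro b
      rw [hV]
      by_cases hbg : b = g
      · subst hbg
        rw [lp.single_apply_self, lp.inner_single_left, if_pos rfl]
      · rw [lp.single_apply_ne _ _ _ hbg, if_neg hbg]
        simp [lp.inner_single_left]
    rw [tsum_congr h3, tsum_ite_eq]
  show ((adjoint V) (ρ X (F (ρ Y (V ξ)))) : ∀ _ : ZMod n, H) i = _
  rw [hV', key]
end
end
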